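/- arXiv:1812.09428 — 10 statements merged into one kernel-verified Lean document; each statement's English description precedes it below -/
import Mathlib

section
/- Let G be a finite group, V a finite-dimensional complex representation of G, and W a G-subrepresentation of the regular representation ℂ[G]. Define CM : V ⊗ ℂ[G] → V ⊗ ℂ[G] as the linear map determined by CM(v ⊗ g) = ρ(g⁻¹)v ⊗ g. Then there exists a G-subrepresentation Y of ℂ[G] such that the image of the subspace V ⊗ W under CM is contained in the subspace V ⊗ Y, and for every irreducible complex representation S of G, S appears in Y if and only if S appears in V ⊗ W. -/
/-!
`CM` conjugates the diagonal action on `V ⊗ ℂ[G]` into the action on the second factor alone,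
so the coordinates of `CM` with respect to a basis of `V` are `G`-maps `V ⊗ ℂ[G] → ℂ[G]`.
Take `Y` to be the sum of the images of `V ⊗ W` under these coordinate maps. As `CM` is
injective, a nonzero `G`-map `S → V ⊗ W` stays nonzero after some coordinate, which lands in `Y`.
Conversely, a `G`-map `S → Y` lifts to linear maps `S → V ⊗ W` whose coordinate images add up to
it; averaging them over `G` makes them `G`-maps without changing that sum, and one is nonzero.
-/

open scoped TensorProduct

/-- The representation `Representation.ofMulAction k G H` as it was in the older Mathlib,
on `H →₀ k` (Mathlib now puts it on the structure `MonoidAlgebra k H`). -/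
noncomputable def oldOfMulAction (k : Type*) [Semiring k] (G : Type*) [Monoid G] (H : Type*)
    [MulAction G H] : Representation k G (H →₀ k) where
  toFun g := Finsupp.lmapDomain k k (g • ·)
  map_one' := by ext x y; simp [Finsupp.mapDomain_single]
  map_mul' x y := by ext z w; simp [Finsupp.mapDomain_single, mul_smul]

theorem oldOfMulAction_single {G : Type} [Group G] (g h : G) (c : ℂ) :
    oldOfMulAction ℂ G G g (Finsupp.single h c) = Finsupp.single (g • h) c := by
  simp [oldOfMulAction, Finsupp.mapDomain_single]

theorem LinearMap.exists_sum_comp_eq_of_range_le_iSup_map {k S M P ι : Type*} [Field k]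
    [Fintype ι] [AddCommGroup S] [Module k S] [AddCommGroup M] [Module k M]
    [AddCommGroup P] [Module k P] {p : Submodule k M} {q : ι → M →ₗ[k] P} {f : S →ₗ[k] P}
    (hf : LinearMap.range f ≤ ⨆ i, p.map (q i)) :
    ∃ F : ι → S →ₗ[k] M, (∀ i, LinearMap.range (F i) ≤ p) ∧ ∑ i, q i ∘ₗ F i = f := by
  have hpre : ∀ s, ∃ m : ι → M, (∀ i, m i ∈ p) ∧ ∑ i, q i (m i) = f s := by
    intro s
    obtain ⟨c, hc, hsum⟩ := (Submodule.mem_iSup_iff_exists_finsupp _ _).mp (hf ⟨s, rfl⟩)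
    choose m hmp hm using fun i => Submodule.mem_map.mp (hc i)
    refine ⟨m, hmp, ?_⟩
    rw [← hsum, Finsupp.sum_fintype _ _ fun _ => rfl]
    exact Finset.sum_congr rfl fun i _ => hm i
  let b := Module.Basis.ofVectorSpace k S
  choose m hmp hm using fun j => hpre (b j)
  refine ⟨fun i => b.constr k fun j => m j i, fun i => ?_, b.ext fun j => ?_⟩
  · rw [Module.Basis.constr_range, Submodule.span_le]
    rintro _ ⟨j, rfl⟩
    exact hmp j i
  · simp [LinearMap.sum_apply, hm]

namespace Representation

section Averaging

variable {k G S M P : Type*} [CommRing k] [Group G] [Fintype G] [Invertible (Fintype.card G : k)]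
  [AddCommGroup S] [Module k S] [AddCommGroup M] [Module k M] [AddCommGroup P] [Module k P]
  {σ : Representation k G S} {τ : Representation k G M} {π : Representation k G P}

theorem averageMap_apply (ρ : Representation k G M) (x : M) :
    averageMap ρ x = ⅟(Fintype.card G : k) • ∑ g, ρ g x := by
  simp [averageMap, GroupAlgebra.average, map_sum]

theorem isIntertwiningMap_averageMap_linHom (F : S →ₗ[k] M) :
    IsIntertwiningMap σ τ (averageMap (linHom σ τ) F) :=
  (mem_linHom_invariants_iff_isIntertwining _).mp fun g => by
    simpa [linHom_apply] using averageMap_invariant (linHom σ τ) F g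

theorem range_averageMap_linHom_le {p : Submodule k M} (hp : ∀ g, ∀ x ∈ p, τ g x ∈ p)
    {F : S →ₗ[k] M} (hF : LinearMap.range F ≤ p) :
    LinearMap.range (averageMap (linHom σ τ) F) ≤ p := by
  rintro _ ⟨s, rfl⟩
  rw [averageMap_apply, LinearMap.smul_apply, LinearMap.sum_apply]
  exact p.smul_mem _ (p.sum_mem fun g _ => hp g _ (hF ⟨_, rfl⟩))

theorem IsIntertwiningMap.comp_averageMap_linHom {q : M →ₗ[k] P} (hq : IsIntertwiningMap τ π q)
    (F : S →ₗ[k] M) :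
    q ∘ₗ averageMap (linHom σ τ) F = averageMap (linHom σ π) (q ∘ₗ F) := by
  ext s
  rw [averageMap_apply, averageMap_apply]
  simp [LinearMap.sum_apply, linHom_apply, hq.isIntertwining]

end Averaging

def AppearsIn {k G S M : Type*} [CommSemiring k] [Monoid G] [AddCommMonoid S] [Module k S]
    [AddCommMonoid M] [Module k M] (σ : Representation k G S) (τ : Representation k G M)
    (p : Submodule k M) : Prop :=
  ∃ f : S →ₗ[k] M, f ≠ 0 ∧ LinearMap.range f ≤ p ∧ IsIntertwiningMap σ τ f

section ImageOfInvariantSubspace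

variable {k G S M P ι : Type*} [Field k] [Group G]
  [AddCommGroup S] [Module k S] [AddCommGroup M] [Module k M] [AddCommGroup P] [Module k P]
  {σ : Representation k G S} {τ : Representation k G M} {π : Representation k G P}
  {p : Submodule k M} {q : ι → M →ₗ[k] P}

theorem apply_mem_iSup_map (hp : ∀ g, ∀ x ∈ p, τ g x ∈ p)
    (hq : ∀ i, IsIntertwiningMap τ π (q i)) (g : G) {y : P} (hy : y ∈ ⨆ i, p.map (q i)) :
    π g y ∈ ⨆ i, p.map (q i) := by
  suffices ⨆ i, p.map (q i) ≤ (⨆ i, p.map (q i)).comap (π g) from this hy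
  refine iSup_le fun i => ?_
  rintro _ ⟨x, hx, rfl⟩
  exact Submodule.mem_iSup_of_mem i ⟨τ g x, hp g x hx, (hq i).isIntertwining g x⟩

variable [Fintype ι] [Fintype G] [Invertible (Fintype.card G : k)]

theorem exists_isIntertwiningMap_sum_comp_eq (hp : ∀ g, ∀ x ∈ p, τ g x ∈ p)
    (hq : ∀ i, IsIntertwiningMap τ π (q i)) {f : S →ₗ[k] P} (hf : IsIntertwiningMap σ π f)
    (hfq : LinearMap.range f ≤ ⨆ i, p.map (q i)) :
    ∃ F : ι → S →ₗ[k] M, (∀ i, IsIntertwiningMap σ τ (F i)) ∧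
      (∀ i, LinearMap.range (F i) ≤ p) ∧ ∑ i, q i ∘ₗ F i = f := by
  obtain ⟨F, hFp, hFf⟩ := LinearMap.exists_sum_comp_eq_of_range_le_iSup_map hfq
  refine ⟨fun i => averageMap (linHom σ τ) (F i), fun i => isIntertwiningMap_averageMap_linHom _,
    fun i => range_averageMap_linHom_le hp (hFp i), ?_⟩
  simp only [(hq _).comp_averageMap_linHom, ← map_sum, hFf]
  exact averageMap_id _ f ((mem_linHom_invariants_iff_isIntertwining f).mpr hf)

theorem appearsIn_iSup_map_iff (hp : ∀ g, ∀ x ∈ p, τ g x ∈ p)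
    (hq : ∀ i, IsIntertwiningMap τ π (q i)) (hinj : ∀ x ∈ p, (∀ i, q i x = 0) → x = 0) :
    AppearsIn σ π (⨆ i, p.map (q i)) ↔ AppearsIn σ τ p := by
  constructor
  · rintro ⟨f, hf0, hfq, hf⟩
    obtain ⟨F, hF, hFp, hFf⟩ := exists_isIntertwiningMap_sum_comp_eq hp hq hf hfq
    obtain ⟨i, hi⟩ : ∃ i, F i ≠ 0 := by
      by_contra! h
      exact hf0 (by simp [← hFf, h])
    exact ⟨F i, hi, hFp i, hF i⟩
  · rintro ⟨f, hf0, hfp, hf⟩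
    obtain ⟨i, hi⟩ : ∃ i, q i ∘ₗ f ≠ 0 := by
      by_contra! h
      exact hf0 (LinearMap.ext fun s =>
        hinj _ (hfp ⟨s, rfl⟩) fun i => LinearMap.congr_fun (h i) s)
    refine ⟨q i ∘ₗ f, hi, ?_, ⟨fun g s => by simp [hf.isIntertwining, (hq i).isIntertwining]⟩⟩
    rw [LinearMap.range_comp]
    exact (Submodule.map_mono hfp).trans (le_iSup (fun i => p.map (q i)) i)

end ImageOfInvariantSubspace

end Representation

namespace TensorProduct

section Coordinates

variable {k ι M N : Type*} [CommSemiring k] [DecidableEq ι] [AddCommMonoid M] [Module k M]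
  [AddCommMonoid N] [Module k N] (b : Module.Basis ι k M)

theorem equivFinsuppOfBasisLeft_lTensor_apply (f : N →ₗ[k] N) (x : M ⊗[k] N) (i : ι) :
    equivFinsuppOfBasisLeft b (f.lTensor M x) i = f (equivFinsuppOfBasisLeft b x i) := by
  induction x using TensorProduct.induction_on with
  | zero => simp
  | tmul m n => simp
  | add x y hx hy => simp [hx, hy]

theorem mem_range_lTensor_subtype_of_forall_mem {p : Submodule k N} {x : M ⊗[k] N}
    (hx : ∀ i, equivFinsuppOfBasisLeft b x i ∈ p) :
    x ∈ LinearMap.range (p.subtype.lTensor M) := by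
  classical
  rw [← (equivFinsuppOfBasisLeft b).symm_apply_apply x, equivFinsuppOfBasisLeft_symm_apply]
  exact Submodule.finsuppSum_mem _ _ _ _ fun i _ => ⟨b i ⊗ₜ ⟨_, hx i⟩, rfl⟩

end Coordinates

theorem tprod_apply_mem_range_lTensor_subtype {k G V N : Type*} [CommSemiring k] [Monoid G]
    [AddCommMonoid V] [Module k V] [AddCommMonoid N] [Module k N]
    (ρ : Representation k G V) {τ : Representation k G N} {p : Submodule k N}
    (hp : ∀ g, ∀ y ∈ p, τ g y ∈ p) (g : G) {x : V ⊗[k] N}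
    (hx : x ∈ LinearMap.range (p.subtype.lTensor V)) :
    ρ.tprod τ g x ∈ LinearMap.range (p.subtype.lTensor V) := by
  obtain ⟨t, rfl⟩ := hx
  induction t using TensorProduct.induction_on with
  | zero => simp
  | tmul v y => exact ⟨ρ g v ⊗ₜ ⟨τ g y, hp g y y.2⟩, by simp⟩
  | add t t' ht ht' => simpa using add_mem ht ht'

section Twist

variable {k G V : Type*} [CommSemiring k] [AddCommMonoid V] [Module k V]

theorem ext_tmul_single {T : Type*} [AddCommMonoid T] [Module k T]
    {A B : V ⊗[k] (G →₀ k) →ₗ[k] T}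
    (h : ∀ v g, A (v ⊗ₜ Finsupp.single g 1) = B (v ⊗ₜ Finsupp.single g 1)) : A = B :=
  TensorProduct.ext' fun v y => by
    induction y using Finsupp.induction_linear with
    | zero => simp
    | add y y' hy hy' => simp [tmul_add, hy, hy']
    | single g c => rw [← Finsupp.smul_single_one, tmul_smul, map_smul, map_smul, h]

noncomputable def twist [DecidableEq G] (T : G → Module.End k V) :
    V ⊗[k] (G →₀ k) →ₗ[k] V ⊗[k] (G →₀ k) :=
  (finsuppScalarRight k k V G).symm.toLinearMap ∘ₗ
    Finsupp.lsum k (fun g => Finsupp.lsingle g ∘ₗ T g) ∘ₗ (finsuppScalarRight k k V G).toLinearMap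

@[simp]
theorem twist_tmul_single [DecidableEq G] (T : G → Module.End k V) (v : V) (g : G) :
    twist T (v ⊗ₜ Finsupp.single g 1) = T g v ⊗ₜ Finsupp.single g 1 := by
  simp [twist, finsuppScalarRight_apply_tmul]

theorem twist_comp_twist [DecidableEq G] (T T' : G → Module.End k V) :
    twist T ∘ₗ twist T' = twist (T * T') :=
  ext_tmul_single fun v g => by simp

theorem twist_one [DecidableEq G] : twist (1 : G → Module.End k V) = LinearMap.id :=
  ext_tmul_single fun v g => by simp

end Twist

theorem twist_inv_comp_tprod {G V : Type} [Group G] [DecidableEq G] [AddCommGroup V] [Module ℂ V]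
    (ρ : Representation ℂ G V) (h : G) :
    twist (fun g => ρ g⁻¹) ∘ₗ ρ.tprod (oldOfMulAction ℂ G G) h =
      (oldOfMulAction ℂ G G h).lTensor V ∘ₗ twist (fun g => ρ g⁻¹) :=
  ext_tmul_single fun v g => by
    simp [oldOfMulAction_single, ← Module.End.mul_apply, ← map_mul]

theorem twist_inv_injective {G V : Type} [Group G] [DecidableEq G] [AddCommGroup V] [Module ℂ V]
    (ρ : Representation ℂ G V) : Function.Injective (twist fun g => ρ g⁻¹) := by
  have hinv : ((fun g => ρ g) * fun g => ρ g⁻¹) = 1 := funext fun g => by simp [← map_mul]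
  refine Function.LeftInverse.injective (g := twist fun g => ρ g) fun x => ?_
  rw [← LinearMap.comp_apply, twist_comp_twist, hinv, twist_one, LinearMap.id_apply]

end TensorProduct

open TensorProduct Representation

/-- Let `G` be a finite group, `V` a finite-dimensional complex representation
of `G`, and `W` a `G`-subrepresentation of the regular representation `ℂ[G]`.  With
`CM (v ⊗ g) = ρ(g⁻¹)v ⊗ g` on `V ⊗ ℂ[G]`, there is a `G`-subrepresentation `Y` of `ℂ[G]`
such that `CM` maps the subspace `V ⊗ W` into `V ⊗ Y`, and an irreducible representation `S`
of `G` appears in `Y` (i.e. admits a nonzero equivariant map `S → Y`) if and only if it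
appears in `V ⊗ W` (with the diagonal action on `V ⊗ ℂ[G]`). -/
theorem stmt1 {G : Type} [Group G] [Fintype G]
    {V : Type} [AddCommGroup V] [Module ℂ V] [FiniteDimensional ℂ V]
    (ρ : Representation ℂ G V)
    (W : Submodule ℂ (G →₀ ℂ))
    (hW : ∀ (g : G), ∀ w ∈ W, oldOfMulAction ℂ G G g w ∈ W)
    (CM : V ⊗[ℂ] (G →₀ ℂ) →ₗ[ℂ] V ⊗[ℂ] (G →₀ ℂ))
    (hCM : ∀ (v : V) (g : G),
      CM (v ⊗ₜ[ℂ] Finsupp.single g 1) = (ρ g⁻¹ v) ⊗ₜ[ℂ] Finsupp.single g 1) :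
    ∃ Y : Submodule ℂ (G →₀ ℂ),
      (∀ (g : G), ∀ y ∈ Y, oldOfMulAction ℂ G G g y ∈ Y) ∧
      Submodule.map CM
          (LinearMap.range (TensorProduct.map (LinearMap.id : V →ₗ[ℂ] V) W.subtype))
        ≤ LinearMap.range (TensorProduct.map (LinearMap.id : V →ₗ[ℂ] V) Y.subtype) ∧
      ∀ (S : Type) [AddCommGroup S] [Module ℂ S] [FiniteDimensional ℂ S] [Nontrivial S]
        (σ : Representation ℂ G S),
        (∀ p : Submodule ℂ S, (∀ g : G, ∀ s ∈ p, σ g s ∈ p) → p = ⊥ ∨ p = ⊤) →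
        ((∃ f : S →ₗ[ℂ] (G →₀ ℂ), f ≠ 0 ∧ LinearMap.range f ≤ Y ∧
            ∀ (g : G) (s : S), f (σ g s) = oldOfMulAction ℂ G G g (f s))
          ↔ (∃ f : S →ₗ[ℂ] V ⊗[ℂ] (G →₀ ℂ), f ≠ 0 ∧
              LinearMap.range f ≤
                LinearMap.range (TensorProduct.map (LinearMap.id : V →ₗ[ℂ] V) W.subtype) ∧
              ∀ (g : G) (s : S),
                f (σ g s) = (ρ.tprod (oldOfMulAction ℂ G G)) g (f s))) := by
  classical
  have : Invertible (Fintype.card G : ℂ) :=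
    invertibleOfNonzero (Nat.cast_ne_zero.mpr Fintype.card_ne_zero)
  obtain rfl : CM = twist fun g => ρ g⁻¹ :=
    ext_tmul_single fun v g => by rw [hCM, twist_tmul_single]
  set N := LinearMap.range (TensorProduct.map (LinearMap.id : V →ₗ[ℂ] V) W.subtype)
  let b := Module.finBasis ℂ V
  let q : Fin (Module.finrank ℂ V) → V ⊗[ℂ] (G →₀ ℂ) →ₗ[ℂ] G →₀ ℂ := fun i =>
    Finsupp.lapply i ∘ₗ (equivFinsuppOfBasisLeft b).toLinearMap ∘ₗ twist fun g => ρ g⁻¹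
  have hN : ∀ g, ∀ x ∈ N, ρ.tprod (oldOfMulAction ℂ G G) g x ∈ N := fun g x hx =>
    tprod_apply_mem_range_lTensor_subtype ρ hW g hx
  have hq : ∀ i, IsIntertwiningMap (ρ.tprod (oldOfMulAction ℂ G G)) (oldOfMulAction ℂ G G) (q i) :=
    fun i => ⟨fun g x => by
      have htwist := LinearMap.congr_fun (twist_inv_comp_tprod ρ g) x
      simp only [LinearMap.comp_apply] at htwist
      simp only [q, LinearMap.comp_apply, LinearEquiv.coe_coe, Finsupp.lapply_apply, htwist,
        equivFinsuppOfBasisLeft_lTensor_apply]⟩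
  have hinj : ∀ x ∈ N, (∀ i, q i x = 0) → x = 0 := fun x _ hx => by
    apply twist_inv_injective ρ
    apply (equivFinsuppOfBasisLeft b).injective
    rw [map_zero, map_zero]
    exact Finsupp.ext hx
  refine ⟨⨆ i, N.map (q i), fun g y hy => apply_mem_iSup_map hN hq g hy, ?_,
    fun S _ _ _ _ σ _ => ?_⟩
  · rintro _ ⟨x, hx, rfl⟩
    exact mem_range_lTensor_subtype_of_forall_mem b fun i =>
      Submodule.mem_iSup_of_mem i ⟨x, hx, rfl⟩
  · simpa only [AppearsIn, isIntertwiningMap_iff] using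
      appearsIn_iSup_map_iff (σ := σ) hN hq hinj
end

section
/- Let G be a finite group, V a finite-dimensional complex inner product space carrying a unitary representation ρ of G, H ≤ G a subgroup, and Y ⊆ V an H-invariant subspace that is irreducible as a representation of H. Assume V is induced from Y, i.e., for g, g' ∈ G the subspaces ρ(g)Y and ρ(g')Y are equal if gH = g'H, are pairwise orthogonal if gH ≠ g'H, and together span V. Let E denote orthogonal projection onto Y, and let W ⊆ V be a nonzero G-invariant subspace. Then there exists a unit vector ψ ∈ W with ⟨ψ, Eψ⟩ = dim W / dim V. -/
/-!
Let `P` and `E` be the orthogonal projections onto `W` and `Y`. As `P` commutes with `G` and `E`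
with `H`, Schur's lemma makes the compression `E P E` a scalar `μ` on `Y`. Since `V` is induced
from `Y`, the conjugates `ρ(g) E ρ(g)⁻¹` are the projections onto the translates `ρ(g) Y`, each
translate occurring `|H|` times and distinct ones being orthogonal and spanning, so they sum to
`|H| • 1`. Composing with `1` and with `P` and taking traces gives `|H| dim V = |G| dim Y` and
`|H| dim W = |G| tr (P E) = |G| μ dim Y`, so `μ = dim W / dim V`. Finally, for `0 ≠ y ∈ Y` the
vector `w = P y` satisfies `⟪w, E w⟫ = μ ‖w‖²`, and `w / ‖w‖` is the required unit vector.
-/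

open scoped ComplexInnerProductSpace InnerProductSpace

section Projection

variable {𝕜 E : Type*} [RCLike 𝕜] [NormedAddCommGroup E] [InnerProductSpace 𝕜 E]

theorem Submodule.starProjection_map_apply_of_inner_map_map (U : Submodule 𝕜 E)
    [U.HasOrthogonalProjection] (f : E →ₗ[𝕜] E) (hf : ∀ x y, ⟪f x, f y⟫_𝕜 = ⟪x, y⟫_𝕜)
    [(U.map f).HasOrthogonalProjection] (x : E) :
    (U.map f).starProjection (f x) = f (U.starProjection x) :=
  have : (U.map (f.isometryOfInner hf).toLinearMap).HasOrthogonalProjection := ‹_›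
  ((f.isometryOfInner hf).map_starProjection U x).symm

theorem Submodule.trace_starProjection [FiniteDimensional 𝕜 E] (U : Submodule 𝕜 E) :
    LinearMap.trace 𝕜 E U.starProjection = Module.finrank 𝕜 U := by
  have : U.orthogonalProjectionOnto.toLinearMap ∘ₗ U.subtype = LinearMap.id := by
    ext u
    simp
  rw [← LinearMap.trace_id 𝕜 U, ← this, ← LinearMap.trace_comp_comm']
  rfl

theorem Submodule.trace_comp_starProjection_of_compression_eq_smul [FiniteDimensional 𝕜 E]
    (U : Submodule 𝕜 E) (A : E →ₗ[𝕜] E) {μ : 𝕜}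
    (hA : ∀ u ∈ U, U.starProjection (A u) = μ • u) :
    LinearMap.trace 𝕜 E (A ∘ₗ (U.starProjection : E →ₗ[𝕜] E)) = μ * Module.finrank 𝕜 U := by
  have hcompress : (U.starProjection : E →ₗ[𝕜] E) ∘ₗ A ∘ₗ (U.starProjection : E →ₗ[𝕜] E)
      = μ • (U.starProjection : E →ₗ[𝕜] E) := by
    ext v
    exact hA _ (U.starProjection_apply_mem v)
  have hidem : (U.starProjection : E →ₗ[𝕜] E) ∘ₗ (U.starProjection : E →ₗ[𝕜] E)
      = U.starProjection := by
    ext v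
    exact U.starProjection_eq_self_iff.2 (U.starProjection_apply_mem v)
  calc LinearMap.trace 𝕜 E (A ∘ₗ (U.starProjection : E →ₗ[𝕜] E))
      = LinearMap.trace 𝕜 E ((A ∘ₗ (U.starProjection : E →ₗ[𝕜] E)) ∘ₗ
          (U.starProjection : E →ₗ[𝕜] E)) := by
        rw [LinearMap.comp_assoc, hidem]
    _ = LinearMap.trace 𝕜 E (μ • (U.starProjection : E →ₗ[𝕜] E)) := by
        rw [LinearMap.trace_comp_comm', ← hcompress]
    _ = μ * Module.finrank 𝕜 U := by
        rw [map_smul, U.trace_starProjection, smul_eq_mul]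

theorem Submodule.exists_norm_eq_one_inner_starProjection_eq {Y W : Submodule 𝕜 E}
    [Y.HasOrthogonalProjection] [W.HasOrthogonalProjection] {μ : 𝕜} (hμ : μ ≠ 0) (hY : Y ≠ ⊥)
    (hYW : ∀ y ∈ Y, Y.starProjection (W.starProjection y) = μ • y) :
    ∃ ψ ∈ W, ‖ψ‖ = 1 ∧ ⟪ψ, Y.starProjection ψ⟫_𝕜 = μ := by
  obtain ⟨y, hy, hy0⟩ := Y.ne_bot_iff.1 hY
  set w := W.starProjection y
  have hEw : Y.starProjection w = μ • y := hYW y hy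
  have hw0 : w ≠ 0 := fun hw => smul_ne_zero hμ hy0 (by rw [← hEw, hw, map_zero])
  have hinner : ⟪w, Y.starProjection w⟫_𝕜 = μ * ‖w‖ ^ 2 := by
    have hww : ⟪w, y⟫_𝕜 = ⟪w, w⟫_𝕜 := calc
      ⟪w, y⟫_𝕜 = ⟪W.starProjection w, y⟫_𝕜 := by
        rw [W.starProjection_eq_self_iff.2 (W.starProjection_apply_mem y)]
      _ = ⟪w, w⟫_𝕜 := W.inner_starProjection_left_eq_right w y
    rw [hEw, inner_smul_right, hww, inner_self_eq_norm_sq_to_K]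
  refine ⟨(‖w‖⁻¹ : 𝕜) • w, W.smul_mem _ (W.starProjection_apply_mem y), norm_smul_inv_norm hw0, ?_⟩
  have hnorm : (‖w‖ : 𝕜) ≠ 0 := by exact_mod_cast norm_ne_zero_iff.2 hw0
  rw [map_smul, inner_smul_left, inner_smul_right, hinner, RCLike.conj_inv, RCLike.conj_ofReal]
  field_simp

end Projection

theorem Subgroup.sum_ite_inv_mul_mem {G M : Type*} [Group G] [Fintype G] [AddCommMonoid M]
    (H : Subgroup G) [DecidablePred (· ∈ H)] (g₀ : G) (v : M) :
    ∑ g : G, (if g⁻¹ * g₀ ∈ H then v else 0) = Nat.card H • v := by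
  rw [Fintype.sum_equiv ((Equiv.inv G).trans (Equiv.mulRight g₀))
      (fun g => if g⁻¹ * g₀ ∈ H then v else 0) (fun g => if g ∈ H then v else 0) fun _ => rfl,
    Finset.sum_ite, Finset.sum_const_zero, add_zero, Finset.sum_const, Nat.card_eq_fintype_card,
    Fintype.card_subtype]

namespace Representation

section Algebraic

variable {k G V : Type*} [Group G]

theorem map_eq_of_forall_mem [Semiring k] [AddCommMonoid V] [Module k V]
    (ρ : Representation k G V) {H : Subgroup G} {U : Submodule k V}
    (hU : ∀ h ∈ H, ∀ u ∈ U, ρ h u ∈ U) {h : G} (hh : h ∈ H) : U.map (ρ h) = U :=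
  le_antisymm (Submodule.map_le_iff_le_comap.2 fun u hu => hU h hh u hu)
    fun u hu => ⟨ρ h⁻¹ u, hU _ (inv_mem hh) u hu, ρ.self_inv_apply h u⟩

theorem trace_conj_eq [CommRing k] [AddCommGroup V] [Module k V] [Module.Free k V]
    [Module.Finite k V] (ρ : Representation k G V) (g : G) (B : V →ₗ[k] V) :
    LinearMap.trace k V (ρ g ∘ₗ B ∘ₗ ρ g⁻¹) = LinearMap.trace k V B := by
  have : ρ g⁻¹ ∘ₗ ρ g = LinearMap.id := LinearMap.ext (ρ.inv_self_apply g)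
  rw [LinearMap.trace_comp_comm', LinearMap.comp_assoc, this, LinearMap.comp_id]

theorem exists_eq_smul_of_commute_of_irreducible [Field k] [IsAlgClosed k] [AddCommGroup V]
    [Module k V] [FiniteDimensional k V] (ρ : Representation k G V) (H : Subgroup G)
    (Y : Submodule k V) (hYinv : ∀ h ∈ H, ∀ y ∈ Y, ρ h y ∈ Y) (hYne : Y ≠ ⊥)
    (hYirr : ∀ q : Submodule k V, q ≤ Y → (∀ h ∈ H, ∀ y ∈ q, ρ h y ∈ q) → q = ⊥ ∨ q = Y)
    (T : V →ₗ[k] V) (hTY : ∀ y ∈ Y, T y ∈ Y) (hT : ∀ h ∈ H, ∀ v, T (ρ h v) = ρ h (T v)) :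
    ∃ μ : k, ∀ y ∈ Y, T y = μ • y := by
  have : Nontrivial Y := Submodule.nontrivial_iff_ne_bot.2 hYne
  obtain ⟨μ, hμ⟩ := Module.End.exists_eigenvalue (T.restrict hTY)
  obtain ⟨y₀, hy₀, hy₀ne⟩ := hμ.exists_hasEigenvector
  let q : Submodule k V := Y ⊓ Module.End.eigenspace T μ
  have hqinv : ∀ h ∈ H, ∀ y ∈ q, ρ h y ∈ q := fun h hh y ⟨hyY, hyT⟩ =>
    ⟨hYinv h hh y hyY, Module.End.mem_eigenspace_iff.2 <| by
      rw [hT h hh, Module.End.mem_eigenspace_iff.1 hyT, map_smul]⟩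
  have hy₀q : (y₀ : V) ∈ q :=
    ⟨y₀.2, Module.End.mem_eigenspace_iff.2 <|
      congr_arg Subtype.val (Module.End.mem_eigenspace_iff.1 hy₀)⟩
  have hq : q = Y := (hYirr q inf_le_left hqinv).resolve_left fun hbot =>
    hy₀ne (Subtype.ext (by simpa [hbot] using hy₀q))
  exact ⟨μ, fun y hy => Module.End.mem_eigenspace_iff.1 (hq ▸ hy : y ∈ q).2⟩

end Algebraic

variable {𝕜 G E : Type*} [RCLike 𝕜] [Group G] [NormedAddCommGroup E]
  [InnerProductSpace 𝕜 E] [FiniteDimensional 𝕜 E] (ρ : Representation 𝕜 G E)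

theorem starProjection_apply_of_forall_mem
    (hρ : ∀ (g : G) (v w : E), ⟪ρ g v, ρ g w⟫_𝕜 = ⟪v, w⟫_𝕜) {H : Subgroup G}
    {U : Submodule 𝕜 E} (hU : ∀ h ∈ H, ∀ u ∈ U, ρ h u ∈ U) {h : G} (hh : h ∈ H) (v : E) :
    U.starProjection (ρ h v) = ρ h (U.starProjection v) := by
  have := U.starProjection_map_apply_of_inner_map_map (ρ h) (hρ h) v
  simpa only [ρ.map_eq_of_forall_mem hU hh] using this

theorem starProjection_map_apply (hρ : ∀ (g : G) (v w : E), ⟪ρ g v, ρ g w⟫_𝕜 = ⟪v, w⟫_𝕜)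
    (U : Submodule 𝕜 E) (g : G) (v : E) :
    (U.map (ρ g)).starProjection v = ρ g (U.starProjection (ρ g⁻¹ v)) := by
  rw [← U.starProjection_map_apply_of_inner_map_map (ρ g) (hρ g), ρ.self_inv_apply]

theorem sum_starProjection_map_eq_card_smul [Fintype G] (H : Subgroup G) (Y : Submodule 𝕜 E)
    (hcoset : ∀ g g' : G, g⁻¹ * g' ∈ H → Y.map (ρ g) = Y.map (ρ g'))
    (horth : ∀ g g' : G, g⁻¹ * g' ∉ H →
      ∀ v ∈ Y.map (ρ g), ∀ w ∈ Y.map (ρ g'), ⟪v, w⟫_𝕜 = 0)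
    (hspan : (⨆ g : G, Y.map (ρ g)) = ⊤) (v : E) :
    ∑ g : G, (Y.map (ρ g)).starProjection v = Nat.card H • v := by
  classical
  refine Submodule.iSup_induction
    (motive := fun v => ∑ g : G, (Y.map (ρ g)).starProjection v = Nat.card H • v) _
    (hspan ▸ Submodule.mem_top) (fun g₀ v hv => ?_)
    (by simp only [map_zero, Finset.sum_const_zero, smul_zero])
    (fun x y hx hy => by simp only [map_add, Finset.sum_add_distrib, hx, hy, smul_add])
  have hproj : ∀ g : G, (Y.map (ρ g)).starProjection v = if g⁻¹ * g₀ ∈ H then v else 0 := by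
    intro g
    split_ifs with hg
    · exact Submodule.starProjection_eq_self_iff.2 (hcoset g g₀ hg ▸ hv)
    · exact (Submodule.starProjection_apply_eq_zero_iff _).2 fun w hw => horth g g₀ hg w hw v hv
  simp only [hproj, H.sum_ite_inv_mul_mem]

theorem card_mul_trace_eq_card_mul_trace_comp_starProjection [Fintype G]
    (hρ : ∀ (g : G) (v w : E), ⟪ρ g v, ρ g w⟫_𝕜 = ⟪v, w⟫_𝕜) (H : Subgroup G)
    (Y : Submodule 𝕜 E) (hcoset : ∀ g g' : G, g⁻¹ * g' ∈ H → Y.map (ρ g) = Y.map (ρ g'))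
    (horth : ∀ g g' : G, g⁻¹ * g' ∉ H →
      ∀ v ∈ Y.map (ρ g), ∀ w ∈ Y.map (ρ g'), ⟪v, w⟫_𝕜 = 0)
    (hspan : (⨆ g : G, Y.map (ρ g)) = ⊤) (A : E →ₗ[𝕜] E)
    (hA : ∀ (g : G) (v : E), A (ρ g v) = ρ g (A v)) :
    Nat.card H * LinearMap.trace 𝕜 E A
      = Fintype.card G * LinearMap.trace 𝕜 E (A ∘ₗ (Y.starProjection : E →ₗ[𝕜] E)) := by
  have htranslate : ∀ g : G, A ∘ₗ ((Y.map (ρ g)).starProjection : E →ₗ[𝕜] E)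
      = ρ g ∘ₗ (A ∘ₗ (Y.starProjection : E →ₗ[𝕜] E)) ∘ₗ ρ g⁻¹ := by
    intro g
    ext v
    simp only [LinearMap.comp_apply, ContinuousLinearMap.coe_coe, ρ.starProjection_map_apply hρ, hA]
  have hsum : Nat.card H • A = ∑ g : G, A ∘ₗ ((Y.map (ρ g)).starProjection : E →ₗ[𝕜] E) := by
    ext v
    simp [← map_sum, ρ.sum_starProjection_map_eq_card_smul H Y hcoset horth hspan]
  calc (Nat.card H : 𝕜) * LinearMap.trace 𝕜 E A = LinearMap.trace 𝕜 E (Nat.card H • A) := by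
        rw [map_nsmul, nsmul_eq_mul]
    _ = ∑ g : G, LinearMap.trace 𝕜 E (A ∘ₗ ((Y.map (ρ g)).starProjection : E →ₗ[𝕜] E)) := by
        rw [hsum, map_sum]
    _ = ∑ _g : G, LinearMap.trace 𝕜 E (A ∘ₗ (Y.starProjection : E →ₗ[𝕜] E)) := by
        simp only [htranslate, ρ.trace_conj_eq]
    _ = Fintype.card G * LinearMap.trace 𝕜 E (A ∘ₗ (Y.starProjection : E →ₗ[𝕜] E)) := by
        rw [Finset.sum_const, Finset.card_univ, nsmul_eq_mul]

end Representation

/-- Let `G` be a finite group, `V` a finite-dimensional complex inner product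
space with a unitary representation `ρ`, `H ≤ G`, and `Y ⊆ V` an `H`-invariant subspace
which is `H`-irreducible.  Assume `V` is induced from `Y`: the translates `ρ(g)Y` depend only
on the coset `gH`, translates for distinct cosets are orthogonal, and together they span `V`.
Let `E` be the orthogonal projection onto `Y` and let `W ⊆ V` be a nonzero `G`-invariant
subspace.  Then there is a unit vector `ψ ∈ W` with `⟪ψ, Eψ⟫ = dim W / dim V`. -/
theorem stmt2 {G : Type} [Group G] [Fintype G]
    {V : Type} [NormedAddCommGroup V] [InnerProductSpace ℂ V] [FiniteDimensional ℂ V]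
    (ρ : Representation ℂ G V)
    (hunitary : ∀ (g : G) (v w : V), ⟪ρ g v, ρ g w⟫ = ⟪v, w⟫)
    (H : Subgroup G)
    (Y : Submodule ℂ V)
    (hYinv : ∀ h ∈ H, ∀ y ∈ Y, ρ h y ∈ Y)
    (hYne : Y ≠ ⊥)
    (hYirr : ∀ q : Submodule ℂ V, q ≤ Y → (∀ h ∈ H, ∀ y ∈ q, ρ h y ∈ q) → q = ⊥ ∨ q = Y)
    (hcoset : ∀ g g' : G, g⁻¹ * g' ∈ H → Y.map (ρ g) = Y.map (ρ g'))
    (horth : ∀ g g' : G, g⁻¹ * g' ∉ H →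
      ∀ v ∈ Y.map (ρ g), ∀ w ∈ Y.map (ρ g'), ⟪v, w⟫ = 0)
    (hspan : (⨆ g : G, Y.map (ρ g)) = ⊤)
    (W : Submodule ℂ V)
    (hWinv : ∀ (g : G), ∀ w ∈ W, ρ g w ∈ W)
    (hWne : W ≠ ⊥) :
    ∃ ψ : V, ψ ∈ W ∧ ‖ψ‖ = 1 ∧
      ⟪ψ, (Y.orthogonalProjection ψ : V)⟫
        = (Module.finrank ℂ W : ℂ) / (Module.finrank ℂ V : ℂ) := by
  have hP : ∀ (g : G) (v : V), W.starProjection (ρ g v) = ρ g (W.starProjection v) :=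
    fun g => ρ.starProjection_apply_of_forall_mem hunitary (H := ⊤)
      (fun g _ => hWinv g) (Subgroup.mem_top g)
  have hE : ∀ h ∈ H, ∀ v : V, Y.starProjection (ρ h v) = ρ h (Y.starProjection v) :=
    fun h hh => ρ.starProjection_apply_of_forall_mem hunitary hYinv hh
  obtain ⟨μ, hμ⟩ := ρ.exists_eq_smul_of_commute_of_irreducible H Y hYinv hYne hYirr
    (Y.starProjection ∘ₗ (W.starProjection : V →ₗ[ℂ] V))
    (fun y _ => Y.starProjection_apply_mem _) (fun h hh v => by simp [hP, hE h hh])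
  have hV := ρ.card_mul_trace_eq_card_mul_trace_comp_starProjection hunitary H Y hcoset horth
    hspan LinearMap.id fun _ _ => rfl
  have hW := ρ.card_mul_trace_eq_card_mul_trace_comp_starProjection hunitary H Y hcoset horth
    hspan W.starProjection hP
  rw [LinearMap.trace_id, LinearMap.id_comp, Y.trace_starProjection] at hV
  rw [W.trace_starProjection, Y.trace_comp_starProjection_of_compression_eq_smul _ hμ] at hW
  have hWpos : Module.finrank ℂ W ≠ 0 := mt Submodule.finrank_eq_zero.1 hWne
  have hVpos : Module.finrank ℂ V ≠ 0 := (Nat.pos_of_ne_zero hWpos |>.trans_le W.finrank_le).ne'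
  have hHpos : Nat.card H ≠ 0 := Nat.card_pos.ne'
  have hμval : μ = Module.finrank ℂ W / Module.finrank ℂ V := by
    rw [eq_div_iff (by exact_mod_cast hVpos)]
    apply mul_left_cancel₀ (by exact_mod_cast hHpos : (Nat.card H : ℂ) ≠ 0)
    linear_combination μ * hV - hW
  obtain ⟨ψ, hψW, hψ, hψE⟩ := Submodule.exists_norm_eq_one_inner_starProjection_eq
    (hμval ▸ div_ne_zero (by exact_mod_cast hWpos) (by exact_mod_cast hVpos)) hYne hμ
  exact ⟨ψ, hψW, hψ, hμval ▸ hψE⟩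
end

section
/- Let G be a finite group, V a finite-dimensional complex inner product space carrying a unitary representation ρ of G, H ≤ G a subgroup, and Y ⊆ V an H-invariant subspace that is irreducible as a representation of H. Assume V is induced from Y, i.e., for g, g' ∈ G the subspaces ρ(g)Y and ρ(g')Y are equal if gH = g'H, are pairwise orthogonal if gH ≠ g'H, and together span V. Let E denote orthogonal projection onto Y, and let W ⊆ V be a G-invariant subspace. Then for every unit vector ψ ∈ W, ⟨ψ, Eψ⟩ ≤ dim W / dim V. -/
/-!
Write `E` and `P` for the orthogonal projections onto `Y` and `W`. As `P` commutes with `G`,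
the compression `E P` of `P` to `Y` commutes with `H`, so Schur's lemma gives `E P E = μ E`.
Inducedness gives `∑_g ρ(g) E ρ(g)⁻¹ = |H|`; pairing this identity with `1` and
with `P` under the trace yields `|G| dim Y = |H| dim V` and `|G| μ dim Y = |H| dim W`, so
`μ = dim W / dim V`. Finally, for a unit vector `ψ ∈ W`,
`‖Eψ‖² = ⟪PEψ, ψ⟫ ≤ ‖PEψ‖ = √μ ‖Eψ‖`, whence `⟪ψ, Eψ⟫ = ‖Eψ‖² ≤ μ`.
-/

open scoped ComplexInnerProductSpace ComplexOrder InnerProductSpace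

theorem sum_ite_inv_mul_mem_eq_card_smul {G V : Type*} [Group G] [Fintype G] [AddCommMonoid V]
    (H : Subgroup G) [DecidablePred (· ∈ H)] (g₀ : G) (v : V) :
    ∑ g : G, (if g⁻¹ * g₀ ∈ H then v else 0) = Nat.card H • v := by
  rw [← Equiv.sum_comp (Equiv.mulLeft g₀)]
  simp only [Equiv.coe_mulLeft, mul_inv_rev, inv_mul_cancel_right, inv_mem_iff]
  rw [Finset.sum_ite, Finset.sum_const_zero, add_zero, Finset.sum_const,
    Nat.card_eq_fintype_card, Fintype.card_subtype]

namespace Representation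

theorem exists_eq_smul_of_irreducible {K V G : Type*} [Field K] [IsAlgClosed K]
    [AddCommGroup V] [Module K V] [FiniteDimensional K V] [Monoid G]
    (ρ : Representation K G V) (S : Set G) (Y : Submodule K V)
    (hYinv : ∀ s ∈ S, ∀ y ∈ Y, ρ s y ∈ Y) (hYne : Y ≠ ⊥)
    (hYirr : ∀ q : Submodule K V, q ≤ Y → (∀ s ∈ S, ∀ y ∈ q, ρ s y ∈ q) → q = ⊥ ∨ q = Y)
    (T : Module.End K V) (hTY : ∀ y ∈ Y, T y ∈ Y)
    (hTρ : ∀ s ∈ S, ∀ y ∈ Y, T (ρ s y) = ρ s (T y)) :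
    ∃ μ : K, ∀ y ∈ Y, T y = μ • y := by
  have : Nontrivial Y := Submodule.nontrivial_iff_ne_bot.mpr hYne
  obtain ⟨μ, hμ⟩ := Module.End.exists_eigenvalue (T.restrict hTY)
  obtain ⟨⟨y₀, hy₀Y⟩, hy₀, hy₀ne⟩ := hμ.exists_hasEigenvector
  set q := Y ⊓ Module.End.eigenspace T μ
  have hq : ∀ y, y ∈ q ↔ y ∈ Y ∧ T y = μ • y := fun y => by
    rw [Submodule.mem_inf, Module.End.mem_eigenspace_iff]
  have hqinv : ∀ s ∈ S, ∀ y ∈ q, ρ s y ∈ q := by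
    intro s hs y hy
    rw [hq] at hy ⊢
    exact ⟨hYinv s hs y hy.1, by rw [hTρ s hs y hy.1, hy.2, map_smul]⟩
  have hqne : q ≠ ⊥ := by
    refine (Submodule.ne_bot_iff q).mpr ⟨y₀, (hq y₀).mpr ⟨hy₀Y, ?_⟩, ?_⟩
    · exact congrArg Subtype.val (Module.End.mem_eigenspace_iff.mp hy₀)
    · exact fun h => hy₀ne (Subtype.ext h)
  have hqY := ((hYirr q inf_le_left hqinv).resolve_left hqne).symm
  exact ⟨μ, fun y hy => ((hq y).mp (hqY ▸ hy)).2⟩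

section Trace

variable {K V G : Type*} [Group G]

theorem sum_conj_eq_card_smul_one [Fintype G] [CommRing K] [AddCommGroup V] [Module K V]
    (ρ : Representation K G V) (H : Subgroup G) (Y : Submodule K V) (E : Module.End K V)
    (hEH : ∀ h ∈ H, ∀ y ∈ Y, E (ρ h y) = ρ h y) (hEG : ∀ g ∉ H, ∀ y ∈ Y, E (ρ g y) = 0)
    (hspan : ⨆ g : G, Y.map (ρ g) = ⊤) :
    ∑ g : G, ρ g * E * ρ g⁻¹ = (Nat.card H : K) • 1 := by
  classical
  set F := ∑ g : G, ρ g * E * ρ g⁻¹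
  have hmap : ∀ g₀, Y.map (ρ g₀) ≤ LinearMap.eqLocus F ((Nat.card H : K) • 1) := by
    rintro g₀ - ⟨y, hy, rfl⟩
    have hterm : ∀ g : G,
        (ρ g * E * ρ g⁻¹) (ρ g₀ y) = if g⁻¹ * g₀ ∈ H then ρ g₀ y else 0 := by
      intro g
      rw [Module.End.mul_apply, Module.End.mul_apply, ← Module.End.mul_apply (ρ g⁻¹), ← map_mul]
      split_ifs with hg
      · rw [hEH _ hg y hy, ← Module.End.mul_apply, ← map_mul, mul_inv_cancel_left]
      · rw [hEG _ hg y hy, map_zero]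
    simp only [F, LinearMap.mem_eqLocus, LinearMap.sum_apply, hterm,
      sum_ite_inv_mul_mem_eq_card_smul, LinearMap.smul_apply, Module.End.one_apply,
      Nat.cast_smul_eq_nsmul]
  have htop : ⊤ ≤ LinearMap.eqLocus F ((Nat.card H : K) • 1) := hspan ▸ iSup_le hmap
  exact LinearMap.ext fun v => htop Submodule.mem_top

theorem trace_conj [CommRing K] [AddCommGroup V] [Module K V] [Module.Free K V]
    [Module.Finite K V] (ρ : Representation K G V) (g : G) (B : Module.End K V) :
    LinearMap.trace K V (ρ g * B * ρ g⁻¹) = LinearMap.trace K V B := by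
  rw [LinearMap.trace_mul_comm, ← mul_assoc, ← map_mul, inv_mul_cancel, map_one, one_mul]

theorem card_mul_trace_mul_eq [Fintype G] [CommRing K] [AddCommGroup V] [Module K V]
    [Module.Free K V] [Module.Finite K V] (ρ : Representation K G V) (H : Subgroup G)
    {E : Module.End K V} (hsum : ∑ g : G, ρ g * E * ρ g⁻¹ = (Nat.card H : K) • 1)
    (A : Module.End K V) (hA : ∀ g, Commute A (ρ g)) :
    (Fintype.card G : K) * LinearMap.trace K V (A * E) = Nat.card H * LinearMap.trace K V A := by
  have hconj : ∀ g : G, A * (ρ g * E * ρ g⁻¹) = ρ g * (A * E) * ρ g⁻¹ := fun g => by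
    rw [← mul_assoc, ← mul_assoc, (hA g).eq, mul_assoc (ρ g)]
  calc (Fintype.card G : K) * LinearMap.trace K V (A * E)
      = LinearMap.trace K V (A * ∑ g : G, ρ g * E * ρ g⁻¹) := by
        simp only [Finset.mul_sum, map_sum, hconj, trace_conj, Finset.sum_const,
          Finset.card_univ, nsmul_eq_mul]
    _ = Nat.card H * LinearMap.trace K V A := by
        rw [hsum, mul_smul_comm, mul_one, map_smul, smul_eq_mul]

theorem mul_finrank_eq_finrank_of_compression [Fintype G] [Field K] [CharZero K]
    [AddCommGroup V] [Module K V] [FiniteDimensional K V] (ρ : Representation K G V)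
    (H : Subgroup G) {Y W : Submodule K V} {E P : Module.End K V}
    (hsum : ∑ g : G, ρ g * E * ρ g⁻¹ = (Nat.card H : K) • 1)
    (hE : LinearMap.IsProj Y E) (hP : LinearMap.IsProj W P) (hPρ : ∀ g, Commute P (ρ g))
    {μ : K} (hμ : ∀ y ∈ Y, E (P y) = μ • y) :
    μ * Module.finrank K V = Module.finrank K W := by
  have hEPE : E * P * E = μ • E := LinearMap.ext fun v => hμ _ (hE.map_mem v)
  have hEE : E * E = E := LinearMap.ext fun v => hE.map_id _ (hE.map_mem v)
  have htrPE : LinearMap.trace K V (P * E) = μ * Module.finrank K Y := by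
    rw [← hEE, ← mul_assoc, LinearMap.trace_mul_comm, ← mul_assoc, hEPE, map_smul, hE.trace,
      smul_eq_mul]
  have hY := ρ.card_mul_trace_mul_eq H hsum 1 fun g => Commute.one_left _
  have hW := ρ.card_mul_trace_mul_eq H hsum P hPρ
  rw [one_mul, hE.trace, LinearMap.trace_one] at hY
  rw [htrPE, hP.trace] at hW
  have hH : (Nat.card H : K) ≠ 0 := Nat.cast_ne_zero.mpr Nat.card_pos.ne'
  refine mul_left_cancel₀ hH ?_
  linear_combination hW - μ * hY

end Trace

theorem inner_apply_left_eq {𝕜 G V : Type*} [RCLike 𝕜] [Group G]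
    [NormedAddCommGroup V] [InnerProductSpace 𝕜 V] (ρ : Representation 𝕜 G V)
    (hunitary : ∀ (g : G) (v w : V), ⟪ρ g v, ρ g w⟫_𝕜 = ⟪v, w⟫_𝕜) (g : G) (u v : V) :
    ⟪ρ g u, v⟫_𝕜 = ⟪u, ρ g⁻¹ v⟫_𝕜 := by
  rw [← hunitary g u, ρ.self_inv_apply]

end Representation

namespace Submodule

variable {𝕜 E : Type*} [RCLike 𝕜] [NormedAddCommGroup E] [InnerProductSpace 𝕜 E]

theorem starProjection_apply_of_mapsTo (U : Submodule 𝕜 E) [U.HasOrthogonalProjection]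
    {T S : E →ₗ[𝕜] E} (hadj : ∀ u v, ⟪T u, v⟫_𝕜 = ⟪u, S v⟫_𝕜) (hT : ∀ u ∈ U, T u ∈ U)
    (hS : ∀ u ∈ U, S u ∈ U) (v : E) :
    U.starProjection (T v) = T (U.starProjection v) := by
  refine eq_starProjection_of_mem_of_inner_eq_zero (hT _ (U.starProjection_apply_mem v))
    fun w hw => ?_
  rw [← map_sub, hadj]
  exact starProjection_inner_eq_zero v _ (hS w hw)

theorem isProj_starProjection (U : Submodule 𝕜 E) [U.HasOrthogonalProjection] :
    LinearMap.IsProj U (U.starProjection : E →ₗ[𝕜] E) :=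
  ⟨U.starProjection_apply_mem, fun _ hx => starProjection_eq_self_iff.mpr hx⟩

theorem inner_starProjection_self (U : Submodule 𝕜 E) [U.HasOrthogonalProjection] (v : E) :
    ⟪v, U.starProjection v⟫_𝕜 = (‖U.starProjection v‖ : 𝕜) ^ 2 := by
  rw [← inner_self_eq_norm_sq_to_K, inner_starProjection_left_eq_right,
    U.starProjection_eq_self_iff.mpr (U.starProjection_apply_mem v)]

theorem norm_sq_starProjection_le_of_compression (Y W : Submodule 𝕜 E)
    [Y.HasOrthogonalProjection] [W.HasOrthogonalProjection] {c : ℝ} (hc : 0 ≤ c)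
    (hYW : ∀ y ∈ Y, Y.starProjection (W.starProjection y) = (c : 𝕜) • y)
    {ψ : E} (hψW : ψ ∈ W) (hψ : ‖ψ‖ ≤ 1) :
    ‖Y.starProjection ψ‖ ^ 2 ≤ c := by
  have hPy : ∀ y ∈ Y, ‖W.starProjection y‖ ^ 2 = c * ‖y‖ ^ 2 := fun y hy => by
    calc ‖W.starProjection y‖ ^ 2 = RCLike.re ⟪y, W.starProjection y⟫_𝕜 := by
          rw [W.inner_starProjection_self, ← RCLike.ofReal_pow, RCLike.ofReal_re]
      _ = RCLike.re ⟪y, Y.starProjection (W.starProjection y)⟫_𝕜 := by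
          rw [← Y.inner_starProjection_left_eq_right, starProjection_eq_self_iff.mpr hy]
      _ = c * ‖y‖ ^ 2 := by
          rw [hYW y hy, inner_smul_right, inner_self_eq_norm_sq_to_K, ← RCLike.ofReal_pow,
            ← RCLike.ofReal_mul, RCLike.ofReal_re]
  have hEψ : ‖Y.starProjection ψ‖ ^ 2 ≤ ‖W.starProjection (Y.starProjection ψ)‖ := by
    calc ‖Y.starProjection ψ‖ ^ 2 = RCLike.re ⟪W.starProjection (Y.starProjection ψ), ψ⟫_𝕜 := by
          rw [inner_starProjection_left_eq_right, starProjection_eq_self_iff.mpr hψW,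
            inner_starProjection_left_eq_right, Y.inner_starProjection_self, ← RCLike.ofReal_pow,
            RCLike.ofReal_re]
      _ ≤ ‖W.starProjection (Y.starProjection ψ)‖ * ‖ψ‖ :=
          (RCLike.re_le_norm _).trans (norm_inner_le_norm _ _)
      _ ≤ ‖W.starProjection (Y.starProjection ψ)‖ := mul_le_of_le_one_right (norm_nonneg _) hψ
  have h4 : ‖Y.starProjection ψ‖ ^ 2 * ‖Y.starProjection ψ‖ ^ 2 ≤ c * ‖Y.starProjection ψ‖ ^ 2 := by
    rw [← hPy _ (Y.starProjection_apply_mem ψ), ← sq]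
    exact pow_le_pow_left₀ (sq_nonneg _) hEψ 2
  rcases (sq_nonneg ‖Y.starProjection ψ‖).eq_or_lt with h0 | hpos
  · rw [← h0]; exact hc
  · exact le_of_mul_le_mul_right h4 hpos

theorem inner_starProjection_le_of_compression {F : Type*} [NormedAddCommGroup F]
    [InnerProductSpace ℂ F] (Y W : Submodule ℂ F) [Y.HasOrthogonalProjection]
    [W.HasOrthogonalProjection] {c : ℝ} (hc : 0 ≤ c)
    (hYW : ∀ y ∈ Y, Y.starProjection (W.starProjection y) = (c : ℂ) • y)
    {ψ : F} (hψW : ψ ∈ W) (hψ : ‖ψ‖ ≤ 1) :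
    ⟪ψ, Y.starProjection ψ⟫ ≤ (c : ℂ) := by
  calc ⟪ψ, Y.starProjection ψ⟫ = ((‖Y.starProjection ψ‖ ^ 2 : ℝ) : ℂ) := by
        rw [Complex.ofReal_pow]; exact Y.inner_starProjection_self ψ
    _ ≤ (c : ℂ) :=
        Complex.real_le_real.mpr (Y.norm_sq_starProjection_le_of_compression W hc hYW hψW hψ)

end Submodule

theorem stmt3_general {G : Type} [Group G] [Fintype G]
    {V : Type} [NormedAddCommGroup V] [InnerProductSpace ℂ V] [FiniteDimensional ℂ V]
    (ρ : Representation ℂ G V)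
    (hunitary : ∀ (g : G) (v w : V), ⟪ρ g v, ρ g w⟫ = ⟪v, w⟫)
    (H : Subgroup G)
    (Y : Submodule ℂ V)
    (hYinv : ∀ h ∈ H, ∀ y ∈ Y, ρ h y ∈ Y)
    (hYne : Y ≠ ⊥)
    (hYirr : ∀ q : Submodule ℂ V, q ≤ Y → (∀ h ∈ H, ∀ y ∈ q, ρ h y ∈ q) → q = ⊥ ∨ q = Y)
    (horth : ∀ g g' : G, g⁻¹ * g' ∉ H →
      ∀ v ∈ Y.map (ρ g), ∀ w ∈ Y.map (ρ g'), ⟪v, w⟫ = 0)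
    (hspan : (⨆ g : G, Y.map (ρ g)) = ⊤)
    (W : Submodule ℂ V)
    (hWinv : ∀ (g : G), ∀ w ∈ W, ρ g w ∈ W) :
    ∀ ψ : V, ψ ∈ W → ‖ψ‖ = 1 →
      ⟪ψ, (Y.orthogonalProjection ψ : V)⟫
        ≤ ((Module.finrank ℂ W : ℂ) / (Module.finrank ℂ V : ℂ)) := by
  intro ψ hψW hψ
  have hρadj := ρ.inner_apply_left_eq hunitary
  have hPρ : ∀ g v, W.starProjection (ρ g v) = ρ g (W.starProjection v) := fun g =>
    W.starProjection_apply_of_mapsTo (hρadj g) (hWinv g) (hWinv g⁻¹)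
  have hEρ : ∀ h ∈ H, ∀ v, Y.starProjection (ρ h v) = ρ h (Y.starProjection v) := fun h hh =>
    Y.starProjection_apply_of_mapsTo (hρadj h) (hYinv h hh) (hYinv h⁻¹ (inv_mem hh))
  obtain ⟨μ, hμ⟩ := ρ.exists_eq_smul_of_irreducible H Y hYinv hYne hYirr
    ((Y.starProjection : Module.End ℂ V) * W.starProjection)
    (fun y _ => Y.starProjection_apply_mem _) fun h hh y _ => by
      simp only [Module.End.mul_apply, ContinuousLinearMap.coe_coe, hPρ, hEρ h hh]
  have hYorth : ∀ g ∉ H, ∀ y ∈ Y, ρ g y ∈ Yᗮ := fun g hg y hy u hu =>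
    horth 1 g (by simpa using hg) u (by simpa using hu) _ ⟨y, hy, rfl⟩
  have hsum := ρ.sum_conj_eq_card_smul_one H Y (Y.starProjection : Module.End ℂ V)
    (fun h hh y hy => Y.starProjection_eq_self_iff.mpr (hYinv h hh y hy))
    (fun g hg y hy => Y.starProjection_apply_eq_zero_iff.mpr (hYorth g hg y hy)) hspan
  have hμV := ρ.mul_finrank_eq_finrank_of_compression H hsum Y.isProj_starProjection
    W.isProj_starProjection (fun g => LinearMap.ext (hPρ g)) hμ
  have hV : (Module.finrank ℂ V : ℂ) ≠ 0 := Nat.cast_ne_zero.mpr <|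
    Nat.one_le_iff_ne_zero.mp ((Submodule.one_le_finrank_iff.mpr hYne).trans Y.finrank_le)
  have hμc : μ = ((Module.finrank ℂ W / Module.finrank ℂ V : ℝ) : ℂ) := by
    push_cast
    rw [eq_div_iff hV, hμV]
  have hle := Y.inner_starProjection_le_of_compression W (by positivity) (hμc ▸ hμ) hψW hψ.le
  simpa using hle

/-- Let `G` be a finite group, `V` a finite-dimensional complex inner product
space with a unitary representation `ρ`, `H ≤ G`, and `Y ⊆ V` an `H`-invariant subspace
which is `H`-irreducible.  Assume `V` is induced from `Y`: the translates `ρ(g)Y` depend only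
on the coset `gH`, translates for distinct cosets are orthogonal, and together they span `V`.
Let `E` be the orthogonal projection onto `Y` and let `W ⊆ V` be a `G`-invariant subspace.
Then every unit vector `ψ ∈ W` satisfies `⟪ψ, Eψ⟫ ≤ dim W / dim V`. -/
theorem stmt3 {G : Type} [Group G] [Fintype G]
    {V : Type} [NormedAddCommGroup V] [InnerProductSpace ℂ V] [FiniteDimensional ℂ V]
    (ρ : Representation ℂ G V)
    (hunitary : ∀ (g : G) (v w : V), ⟪ρ g v, ρ g w⟫ = ⟪v, w⟫)
    (H : Subgroup G)
    (Y : Submodule ℂ V)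
    (hYinv : ∀ h ∈ H, ∀ y ∈ Y, ρ h y ∈ Y)
    (hYne : Y ≠ ⊥)
    (hYirr : ∀ q : Submodule ℂ V, q ≤ Y → (∀ h ∈ H, ∀ y ∈ q, ρ h y ∈ q) → q = ⊥ ∨ q = Y)
    (hcoset : ∀ g g' : G, g⁻¹ * g' ∈ H → Y.map (ρ g) = Y.map (ρ g'))
    (horth : ∀ g g' : G, g⁻¹ * g' ∉ H →
      ∀ v ∈ Y.map (ρ g), ∀ w ∈ Y.map (ρ g'), ⟪v, w⟫ = 0)
    (hspan : (⨆ g : G, Y.map (ρ g)) = ⊤)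
    (W : Submodule ℂ V)
    (hWinv : ∀ (g : G), ∀ w ∈ W, ρ g w ∈ W) :
    ∀ ψ : V, ψ ∈ W → ‖ψ‖ = 1 →
      ⟪ψ, (Y.orthogonalProjection ψ : V)⟫
        ≤ ((Module.finrank ℂ W : ℂ) / (Module.finrank ℂ V : ℂ)) :=
  stmt3_general ρ hunitary H Y hYinv hYne hYirr horth hspan W hWinv
end

section
/- Let n ≥ 2 and let V = ℂⁿ carry the permutation representation of the symmetric group Sₙ (σ permutes the standard basis vectors e₁,…,eₙ). For any natural number t ≤ n − 2, if a vector v in the t-fold tensor power V^{⊗t} (with diagonal Sₙ-action) satisfies σ·v = sign(σ)·v for all σ ∈ Sₙ, then v = 0. Moreover, for t = n − 1 there exists a nonzero v ∈ V^{⊗(n−1)} with σ·v = sign(σ)·v for all σ ∈ Sₙ. -/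
open scoped TensorProduct

/-- The `t`-fold tensor power `V^{⊗t}` of `V = ℂⁿ` (realized as `Fin n →₀ ℂ`, with basis
vectors indexed by `{1, …, n}`). -/
noncomputable def TPow (n t : ℕ) : Type := ⨂[ℂ] _ : Fin t, (Fin n →₀ ℂ)

noncomputable instance (n t : ℕ) : AddCommGroup (TPow n t) :=
  inferInstanceAs (AddCommGroup (⨂[ℂ] _ : Fin t, (Fin n →₀ ℂ)))

noncomputable instance (n t : ℕ) : Module ℂ (TPow n t) :=
  inferInstanceAs (Module ℂ (⨂[ℂ] _ : Fin t, (Fin n →₀ ℂ)))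

/-- The diagonal action of a permutation `σ` on `V^{⊗t}`, where `σ` acts on each tensor
factor of `V = ℂⁿ` by the permutation representation (permuting the basis vectors). -/
noncomputable def diagPerm (n t : ℕ) (σ : Equiv.Perm (Fin n)) : TPow n t →ₗ[ℂ] TPow n t :=
  PiTensorProduct.map (fun _ => Finsupp.lmapDomain ℂ ℂ (fun i : Fin n => σ • i))

/-!
In the basis `e_f = e_{f 1} ⊗ ⋯ ⊗ e_{f t}`, `f : Fin t → Fin n`, of `V^{⊗t}` a permutation acts by
`e_f ↦ e_{σ ∘ f}`. If `t ≤ n - 2`, every `f` misses two indices `a ≠ b`; the transposition `(a b)`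
fixes `e_f` but acts by `-1` on a sign vector `v`, so the `e_f`-coefficient of `v` vanishes.
For `t = n - 1`, antisymmetrizing `e_f` for the inclusion `f : Fin (n - 1) → Fin n` gives a sign
vector whose `e_f`-coefficient is `1`, since only the identity permutation fixes `f`.
-/

open Equiv Function

lemma Set.nontrivial_compl_range_of_card_add_two_le {α β : Type*} [Fintype α] [Fintype β]
    (f : α → β) (h : Fintype.card α + 2 ≤ Fintype.card β) : (Set.range f)ᶜ.Nontrivial := by
  rw [← Set.one_lt_ncard_iff_nontrivial]
  have hrange : (Set.range f).ncard ≤ Fintype.card α := by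
    rw [← Set.image_univ, ← Nat.card_eq_fintype_card, ← Set.ncard_univ]
    exact Set.ncard_image_le
  have hsum := Set.ncard_add_ncard_compl (Set.range f)
  rw [Nat.card_eq_fintype_card] at hsum
  omega

lemma Equiv.Perm.eq_one_of_comp_eq_self {α β : Type*} {g : α → β} {π : Perm β}
    (hg : (Set.range g)ᶜ.Subsingleton) (hπ : π ∘ g = g) : π = 1 := by
  have hfix : ∀ x ∈ Set.range g, π x = x := by
    rintro _ ⟨i, rfl⟩
    exact congrFun hπ i
  ext x
  by_cases hx : x ∈ Set.range g
  · exact hfix x hx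
  · have hπx : π x ∉ Set.range g := fun h => hx (π.injective (hfix _ h) ▸ h)
    exact hg hπx hx

lemma Fin.subsingleton_compl_range_castLE {m n : ℕ} (h : m ≤ n) (hn : n ≤ m + 1) :
    (Set.range (Fin.castLE h))ᶜ.Subsingleton := by
  have hval : ∀ x : Fin n, x ∉ Set.range (Fin.castLE h) → (x : ℕ) = m := fun x hx => by
    by_contra hne
    exact hx ⟨⟨x, by omega⟩, rfl⟩
  exact fun x hx y hy => Fin.ext ((hval x hx).trans (hval y hy).symm)

noncomputable def tensorBasis (n t : ℕ) : Module.Basis (Fin t → Fin n) ℂ (TPow n t) :=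
  Basis.piTensorProduct fun _ => Finsupp.basisSingleOne

lemma tensorBasis_apply (n t : ℕ) (f : Fin t → Fin n) :
    tensorBasis n t f = ⨂ₜ[ℂ] i, Finsupp.single (f i) (1 : ℂ) :=
  (Basis.piTensorProduct_apply (fun _ => Finsupp.basisSingleOne (R := ℂ) (ι := Fin n)) f).trans
    (by simp)

lemma diagPerm_tprod (n t : ℕ) (σ : Perm (Fin n)) (v : Fin t → Fin n →₀ ℂ) :
    diagPerm n t σ (⨂ₜ[ℂ] i, v i) = ⨂ₜ[ℂ] i, Finsupp.mapDomain σ (v i) :=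
  PiTensorProduct.map_tprod _ _

lemma diagPerm_tensorBasis (n t : ℕ) (σ : Perm (Fin n)) (f : Fin t → Fin n) :
    diagPerm n t σ (tensorBasis n t f) = tensorBasis n t (σ ∘ f) := by
  simp only [tensorBasis_apply, diagPerm_tprod, Finsupp.mapDomain_single, comp_apply]
  rfl

lemma tensorBasis_repr_diagPerm (n t : ℕ) (σ : Perm (Fin n)) (v : TPow n t)
    (f : Fin t → Fin n) :
    (tensorBasis n t).repr (diagPerm n t σ v) f = (tensorBasis n t).repr v (σ.symm ∘ f) := by
  refine LinearMap.congr_fun (f := Finsupp.lapply f ∘ₗ (tensorBasis n t).repr.toLinearMap ∘ₗ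
    diagPerm n t σ) (g := Finsupp.lapply (σ.symm ∘ f) ∘ₗ (tensorBasis n t).repr.toLinearMap)
    ((tensorBasis n t).ext fun g => ?_) v
  simp [diagPerm_tensorBasis, Finsupp.single_apply, Equiv.eq_symm_comp]

def IsSignVector (n t : ℕ) (v : TPow n t) : Prop :=
  ∀ σ : Perm (Fin n), diagPerm n t σ v = ((Perm.sign σ : ℤ) : ℂ) • v

lemma IsSignVector.tensorBasis_repr_eq_zero {n t : ℕ} {v : TPow n t} (hv : IsSignVector n t v)
    {f : Fin t → Fin n} (hf : (Set.range f)ᶜ.Nontrivial) : (tensorBasis n t).repr v f = 0 := by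
  obtain ⟨a, ha, b, hb, hab⟩ := hf
  have hfix : (swap a b).symm ∘ f = f := funext fun i =>
    swap_apply_of_ne_of_ne (fun h => ha ⟨i, h⟩) (fun h => hb ⟨i, h⟩)
  have h := tensorBasis_repr_diagPerm n t (swap a b) v f
  rw [hv, hfix, Perm.sign_swap hab] at h
  simpa [neg_eq_self] using h

lemma IsSignVector.eq_zero {n t : ℕ} {v : TPow n t} (hv : IsSignVector n t v)
    (ht : t + 2 ≤ n) : v = 0 := by
  refine (tensorBasis n t).ext_elem fun f => ?_
  rw [hv.tensorBasis_repr_eq_zero (Set.nontrivial_compl_range_of_card_add_two_le f (by simpa)),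
    map_zero, Finsupp.zero_apply]

lemma diagPerm_mul (n t : ℕ) (σ τ : Perm (Fin n)) :
    diagPerm n t (σ * τ) = diagPerm n t σ ∘ₗ diagPerm n t τ :=
  (tensorBasis n t).ext fun f => by simp [diagPerm_tensorBasis, comp_assoc]

noncomputable def antisymmetrize (n t : ℕ) (w : TPow n t) : TPow n t :=
  ∑ π : Perm (Fin n), ((Perm.sign π : ℤ) : ℂ) • diagPerm n t π w

lemma isSignVector_antisymmetrize (n t : ℕ) (w : TPow n t) :
    IsSignVector n t (antisymmetrize n t w) := by
  intro σ
  rw [antisymmetrize, map_sum, Finset.smul_sum]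
  refine Fintype.sum_equiv (Equiv.mulLeft σ) _ _ fun π => ?_
  have hsign : Perm.sign π = Perm.sign σ * Perm.sign (σ * π) := by
    rw [Perm.sign_mul, ← mul_assoc, Int.units_mul_self, one_mul]
  rw [map_smul, ← LinearMap.comp_apply, ← diagPerm_mul, smul_smul, hsign, Units.val_mul,
    Int.cast_mul, coe_mulLeft]

lemma tensorBasis_repr_antisymmetrize_self {n t : ℕ} {g : Fin t → Fin n}
    (hg : ∀ π : Perm (Fin n), π ∘ g = g → π = 1) :
    (tensorBasis n t).repr (antisymmetrize n t (tensorBasis n t g)) g = 1 := by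
  classical
  have hterm : ∀ π : Perm (Fin n), (tensorBasis n t).repr
      (((Perm.sign π : ℤ) : ℂ) • diagPerm n t π (tensorBasis n t g)) g =
        if π = 1 then 1 else 0 := by
    intro π
    by_cases hπ : π = 1
    · simp [hπ, diagPerm_tensorBasis]
    · simp [hπ, diagPerm_tensorBasis, mt (hg π) hπ]
  rw [antisymmetrize, map_sum, Finsupp.finsetSum_apply, Finset.sum_congr rfl fun π _ => hterm π,
    Finset.sum_ite_eq' Finset.univ, if_pos (Finset.mem_univ _)]

/-- Let `n ≥ 2` and let `V = ℂⁿ` carry the permutation representation of `Sₙ`.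
For any `t ≤ n - 2`, a vector `v ∈ V^{⊗t}` (diagonal action) with `σ · v = sign σ • v` for
all `σ ∈ Sₙ` must be zero; moreover for `t = n - 1` there is a nonzero such vector.
(The sign representation appears in `V^{⊗t}` iff `t ≥ n - 1`.) -/
theorem stmt6 (n : ℕ) (hn : 2 ≤ n) :
    (∀ t : ℕ, t ≤ n - 2 →
      ∀ v : TPow n t,
        (∀ σ : Equiv.Perm (Fin n),
          diagPerm n t σ v = ((Equiv.Perm.sign σ : ℤ) : ℂ) • v) →
        v = 0) ∧
    (∃ v : TPow n (n - 1), v ≠ 0 ∧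
      ∀ σ : Equiv.Perm (Fin n),
        diagPerm n (n - 1) σ v = ((Equiv.Perm.sign σ : ℤ) : ℂ) • v) := by
  refine ⟨fun t ht v hv => IsSignVector.eq_zero hv (by omega), ?_⟩
  let g : Fin (n - 1) → Fin n := Fin.castLE (Nat.sub_le n 1)
  have hg (π : Perm (Fin n)) : π ∘ g = g → π = 1 :=
    Perm.eq_one_of_comp_eq_self (Fin.subsingleton_compl_range_castLE _ (by omega))
  refine ⟨antisymmetrize n (n - 1) (tensorBasis n (n - 1) g), fun h => ?_,
    isSignVector_antisymmetrize _ _ _⟩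
  simpa [h] using tensorBasis_repr_antisymmetrize_self hg
end

section
/- Let n ≥ 2 and let t be a natural number. There exists a Young diagram with exactly n cells whose first row has length at least n − t and whose first column has length at least n − t, if and only if t ≥ ⌊n/2⌋. -/
/-!
The first row and the first column of a Young diagram share only the corner cell, so
`rowLen 0 + colLen 0 ≤ n + 1`, which forces `2 (n - t) ≤ n + 1`, i.e. `⌊n/2⌋ ≤ t`. Conversely
the hook with a first row of `n - t` cells and its remaining cells in the first column has a
first column of length `t + 1 ≥ n - t`.
-/

open Finset

namespace YoungDiagram

theorem rowLen_add_colLen_le_card_add_one (μ : YoungDiagram) (i j : ℕ) :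
    μ.rowLen i + μ.colLen j ≤ μ.card + 1 := by
  have hsub : μ.row i ∪ μ.col j ⊆ μ.cells := fun c hc => by
    rcases mem_union.mp hc with hc | hc
    exacts [(mem_row_iff.mp hc).1, (mem_col_iff.mp hc).1]
  have hinter : #(μ.row i ∩ μ.col j) ≤ 1 := card_le_one.mpr fun c hc d hd => by
    simp only [mem_inter, mem_row_iff, mem_col_iff] at hc hd
    exact Prod.ext (hc.1.2.trans hd.1.2.symm) (hc.2.2.trans hd.2.2.symm)
  calc μ.rowLen i + μ.colLen j = #(μ.row i ∪ μ.col j) + #(μ.row i ∩ μ.col j) := by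
        rw [rowLen_eq_card, colLen_eq_card, card_union_add_card_inter]
    _ ≤ μ.card + 1 := add_le_add (card_le_card hsub) hinter

theorem rowLen_eq_of_mem_iff {μ : YoungDiagram} {i k : ℕ} (h : ∀ j, (i, j) ∈ μ ↔ j < k) :
    μ.rowLen i = k :=
  eq_of_forall_lt_iff fun j => by rw [← mem_iff_lt_rowLen, h]

theorem colLen_eq_of_mem_iff {μ : YoungDiagram} {j k : ℕ} (h : ∀ i, (i, j) ∈ μ ↔ i < k) :
    μ.colLen j = k :=
  eq_of_forall_lt_iff fun i => by rw [← mem_iff_lt_colLen, h]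

def hook (a b : ℕ) : YoungDiagram where
  cells := ({0} ×ˢ range (a + 1)) ∪ (Ioc 0 b ×ˢ {0})
  isLowerSet := by
    rintro ⟨i, j⟩ ⟨i', j'⟩ ⟨hi : i' ≤ i, hj : j' ≤ j⟩ hc
    simp only [coe_union, coe_product, coe_singleton, coe_range, coe_Ioc, Set.mem_union,
      Set.mem_prod, Set.mem_singleton_iff, Set.mem_Iio, Set.mem_Ioc] at hc ⊢
    omega

theorem mem_hook {a b i j : ℕ} : (i, j) ∈ hook a b ↔ i = 0 ∧ j ≤ a ∨ j = 0 ∧ i ≤ b := by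
  rw [← mem_cells]
  simp only [hook, mem_union, mem_product, mem_singleton, mem_range, mem_Ioc]
  omega

theorem card_hook (a b : ℕ) : (hook a b).card = a + b + 1 := by
  have hdisj : Disjoint ({0} ×ˢ range (a + 1)) (Ioc 0 b ×ˢ ({0} : Finset ℕ)) :=
    disjoint_product.mpr (Or.inl (disjoint_singleton_left.mpr (by simp)))
  change #(({0} ×ˢ range (a + 1)) ∪ (Ioc 0 b ×ˢ {0})) = _
  rw [card_union_of_disjoint hdisj, card_product, card_product]
  simp only [card_singleton, card_range, Nat.card_Ioc]
  omega

theorem rowLen_hook_zero (a b : ℕ) : (hook a b).rowLen 0 = a + 1 :=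
  rowLen_eq_of_mem_iff fun j => by rw [mem_hook]; omega

theorem colLen_hook_zero (a b : ℕ) : (hook a b).colLen 0 = b + 1 :=
  colLen_eq_of_mem_iff fun i => by rw [mem_hook]; omega

end YoungDiagram

/-- For `n ≥ 2` and `t : ℕ`, there exists a Young diagram with exactly `n`
cells whose first row and first column both have length at least `n - t` if and only if
`t ≥ ⌊n/2⌋`. -/
theorem stmt12 (n t : ℕ) (hn : 2 ≤ n) :
    (∃ μ : YoungDiagram, μ.card = n ∧ n - t ≤ μ.rowLen 0 ∧ n - t ≤ μ.colLen 0)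
      ↔ n / 2 ≤ t := by
  constructor
  · rintro ⟨μ, rfl, hrow, hcol⟩
    have := μ.rowLen_add_colLen_le_card_add_one 0 0
    omega
  · intro ht
    -- the `min` only matters when `n ≤ t`, where `n - t` truncates to `0`
    refine ⟨YoungDiagram.hook (n - 1 - t) (min t (n - 1)), ?_, ?_, ?_⟩
    · rw [YoungDiagram.card_hook]; omega
    · rw [YoungDiagram.rowLen_hook_zero]; omega
    · rw [YoungDiagram.colLen_hook_zero]; omega
end

section
/- Let p be a prime and n ≥ 1. For x, y ∈ (ℤ/pℤ)ⁿ and z ∈ ℤ/pℤ, let A(x,y,z) be the Heisenberg matrix determined by (x,y,z). Then the number of vectors v ∈ (ℤ/pℤ)^{n+2} with A(x,y,z)·v = v equals: p^{n+2} if (x,y,z) = (0,0,0); pⁿ if x ≠ 0 and y ≠ 0; and p^{n+1} in all other cases. -/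
/-!
Write `A(x,y,z) = 1 + N`. The rows of `N` are `(0, x, z)`, then `yₖ eₙ₊₁` for the middle
indices, then `0`; so `v` is fixed iff `(0, x, z) ⬝ v = 0` and `vₙ₊₁ • y = 0`. If `y = 0` this
is one linear equation, trivial exactly when `x = z = 0`. If `y ≠ 0` it forces `vₙ₊₁ = 0`, after
which the first equation reads `x ⬝ (v₁, …, vₙ) = 0`, independent of `vₙ₊₁ = 0` exactly when
`x ≠ 0`. A surjective homomorphism onto `K^r` has a kernel of index `|K|^r`, which gives the counts.
-/

/-- The Heisenberg matrix `A(x,y,z)`: the `(n+2) × (n+2)` matrix over `ℤ/pℤ` with `1`'s on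
the main diagonal, first row `(1, x₁, …, xₙ, z)`, last column `(z, y₁, …, yₙ, 1)ᵀ`, and all
other entries `0`. -/
def heis (p n : ℕ) (x y : Fin n → ZMod p) (z : ZMod p) :
    Matrix (Fin (n + 2)) (Fin (n + 2)) (ZMod p) :=
  Matrix.of fun i j =>
    if i = j then 1
    else if i.val = 0 ∧ j.val = n + 1 then z
    else if h : i.val = 0 ∧ j.val - 1 < n then x ⟨j.val - 1, h.2⟩
    else if h : j.val = n + 1 ∧ i.val - 1 < n then y ⟨i.val - 1, h.2⟩
    else 0

open Finset Matrix

theorem card_filter_map_eq_zero_mul_card_of_surjective {G H : Type*} [AddGroup G] [Fintype G]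
    [AddGroup H] [Fintype H] (f : G →+ H) (hf : Function.Surjective f)
    [DecidablePred fun g => f g = 0] :
    #{g | f g = 0} * Fintype.card H = Fintype.card G := by
  have hker : Nat.card f.ker = #{g | f g = 0} := by
    rw [← Fintype.card_subtype, ← Nat.card_eq_fintype_card]
    rfl
  rw [← hker, ← Nat.card_eq_fintype_card, ← Nat.card_eq_fintype_card, ← f.ker.card_mul_index,
    AddSubgroup.index_ker, f.range_eq_top.2 hf, AddSubgroup.card_top]

section DotProduct

variable {K ι : Type*} [Field K] [Fintype K] [DecidableEq K] [Fintype ι] [DecidableEq ι]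

theorem card_filter_dotProduct_eq_zero {c : ι → K} (hc : c ≠ 0) :
    #{v : ι → K | c ⬝ᵥ v = 0} = Fintype.card K ^ (Fintype.card ι - 1) := by
  obtain ⟨i, hi⟩ : ∃ i, c i ≠ 0 := Function.ne_iff.mp hc
  let f : (ι → K) →+ K := AddMonoidHom.mk' (c ⬝ᵥ ·) (dotProduct_add c)
  have hf : Function.Surjective f := fun t =>
    ⟨Pi.single i ((c i)⁻¹ * t), by simp [f, dotProduct_single, mul_inv_cancel_left₀ hi]⟩
  have key := card_filter_map_eq_zero_mul_card_of_surjective f hf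
  have hcard : 1 ≤ Fintype.card ι := Fintype.card_pos_iff.mpr ⟨i⟩
  rw [Fintype.card_fun, ← Nat.sub_add_cancel hcard, pow_succ] at key
  exact Nat.eq_of_mul_eq_mul_right Fintype.card_pos key

theorem card_filter_apply_eq_zero (i : ι) :
    #{v : ι → K | v i = 0} = Fintype.card K ^ (Fintype.card ι - 1) := by
  simpa [single_dotProduct] using
    card_filter_dotProduct_eq_zero (Pi.single_ne_zero_iff.mpr one_ne_zero :
      Pi.single i (1 : K) ≠ 0)

theorem card_filter_dotProduct_eq_zero_and_apply_eq_zero {c : ι → K} {i j : ι} (hij : i ≠ j)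
    (hi : c i ≠ 0) :
    #{v : ι → K | c ⬝ᵥ v = 0 ∧ v j = 0} = Fintype.card K ^ (Fintype.card ι - 2) := by
  let f : (ι → K) →+ K × K :=
    (AddMonoidHom.mk' (c ⬝ᵥ ·) (dotProduct_add c)).prod (Pi.evalAddMonoidHom _ j)
  have hf : Function.Surjective f := fun ⟨b, a⟩ =>
    ⟨Pi.single j a + Pi.single i ((c i)⁻¹ * (b - c j * a)), by
      simp [f, dotProduct_single, hi, hij.symm]⟩
  have key := card_filter_map_eq_zero_mul_card_of_surjective f hf
  have hcard : 2 ≤ Fintype.card ι := Fintype.one_lt_card_iff.mpr ⟨i, j, hij⟩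
  rw [Fintype.card_fun, Fintype.card_prod, ← sq, ← Nat.sub_add_cancel hcard, pow_add] at key
  have hfilter : filter (fun v => c ⬝ᵥ v = 0 ∧ v j = 0) univ = filter (fun v => f v = 0) univ := by
    simp [f]
  rw [hfilter]
  exact Nat.eq_of_mul_eq_mul_right (pow_pos Fintype.card_pos 2) key

end DotProduct

theorem cons_zero_snoc_eq_zero_iff {M : Type*} [Zero M] {n : ℕ} {x : Fin n → M} {z : M} :
    (Fin.cons 0 (Fin.snoc x z) : Fin (n + 2) → M) = 0 ↔ x = 0 ∧ z = 0 := by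
  rw [funext_iff, Fin.forall_fin_succ, Fin.forall_fin_succ']
  simp [funext_iff]

theorem cons_zero_snoc_zero {M : Type*} [Zero M] {n : ℕ} (z : M) :
    (Fin.cons 0 (Fin.snoc 0 z) : Fin (n + 2) → M) = Pi.single (Fin.last _) z := by
  ext j
  refine Fin.cases ?_ (fun j => Fin.lastCases ?_ (fun k => ?_) j) j <;> simp

section Heisenberg

variable {p n : ℕ} (x y : Fin n → ZMod p) (z : ZMod p)

-- `Fin.val_eq_zero_iff` is removed from the simp sets below: it undoes `Fin.ext_iff` and loops.
theorem heis_sub_one_apply_zero : (heis p n x y z - 1) 0 = Fin.cons 0 (Fin.snoc x z) := by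
  ext j
  refine Fin.cases ?_ (fun j => Fin.lastCases ?_ (fun k => ?_) j) j
  all_goals simp [heis, Fin.ext_iff, -Fin.val_eq_zero_iff, fun k : Fin n => k.isLt.ne]

theorem heis_sub_one_apply_succ_castSucc (k : Fin n) :
    (heis p n x y z - 1) k.castSucc.succ = Pi.single (Fin.last _) (y k) := by
  ext j
  refine Fin.cases ?_ (fun j => Fin.lastCases ?_ (fun k => ?_) j) j
  all_goals simp [heis, Fin.ext_iff, -Fin.val_eq_zero_iff, one_apply,
    fun k : Fin n => k.isLt.ne]

theorem heis_sub_one_apply_last : (heis p n x y z - 1) (Fin.last _) = 0 := by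
  ext j
  simp [heis, Fin.ext_iff, -Fin.val_eq_zero_iff, one_apply]

theorem heis_mulVec_eq_self_iff (v : Fin (n + 2) → ZMod p) :
    heis p n x y z *ᵥ v = v ↔
      Fin.cons 0 (Fin.snoc x z) ⬝ᵥ v = 0 ∧ v (Fin.last _) • y = 0 := by
  have hsub : heis p n x y z *ᵥ v - v = (heis p n x y z - 1) *ᵥ v := by
    rw [sub_mulVec, one_mulVec]
  rw [← sub_eq_zero, hsub, funext_iff, Fin.forall_fin_succ, Fin.forall_fin_succ']
  simp only [mulVec, Fin.succ_last, heis_sub_one_apply_zero, heis_sub_one_apply_succ_castSucc,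
    heis_sub_one_apply_last, single_dotProduct, zero_dotProduct', Pi.zero_apply, and_true,
    funext_iff (f := v _ • y), Pi.smul_apply, smul_eq_mul, mul_comm (v _)]

end Heisenberg

theorem stmt13_general (p : ℕ) [Fact p.Prime] (n : ℕ)
    (x y : Fin n → ZMod p) (z : ZMod p) :
    (Finset.univ.filter
        (fun v : Fin (n + 2) → ZMod p => (heis p n x y z).mulVec v = v)).card =
      if x = 0 ∧ y = 0 ∧ z = 0 then p ^ (n + 2)
      else if x ≠ 0 ∧ y ≠ 0 then p ^ n
      else p ^ (n + 1) := by
  simp_rw [heis_mulVec_eq_self_iff]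
  by_cases hy : y = 0
  · subst hy
    simp only [smul_zero, and_true]
    by_cases hxz : x = 0 ∧ z = 0
    · obtain ⟨rfl, rfl⟩ := hxz
      simp [cons_zero_snoc_zero]
    · rw [card_filter_dotProduct_eq_zero (mt cons_zero_snoc_eq_zero_iff.mp hxz)]
      simp [hxz]
  · simp only [smul_eq_zero, hy, or_false]
    by_cases hx : x = 0
    · subst hx
      simp only [cons_zero_snoc_zero, single_dotProduct]
      rw [filter_congr fun v _ => and_iff_right_of_imp fun h => by rw [h, mul_zero],
        card_filter_apply_eq_zero]
      simp [hy]
    · obtain ⟨k, hk⟩ : ∃ k, x k ≠ 0 := Function.ne_iff.mp hx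
      have hne : k.castSucc.succ ≠ Fin.last (n + 1) := by simp [Fin.ext_iff, k.isLt.ne]
      rw [card_filter_dotProduct_eq_zero_and_apply_eq_zero hne (by simpa using hk)]
      simp [hx, hy]

/-- The number of vectors `v ∈ (ℤ/pℤ)^{n+2}` fixed by the Heisenberg matrix
`A(x,y,z)` is `p^{n+2}` if `(x,y,z) = (0,0,0)`, `pⁿ` if `x ≠ 0` and `y ≠ 0`, and `p^{n+1}`
in all other cases. -/
theorem stmt13 (p : ℕ) [Fact p.Prime] (n : ℕ) (hn : 1 ≤ n)
    (x y : Fin n → ZMod p) (z : ZMod p) :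
    (Finset.univ.filter
        (fun v : Fin (n + 2) → ZMod p => (heis p n x y z).mulVec v = v)).card =
      if x = 0 ∧ y = 0 ∧ z = 0 then p ^ (n + 2)
      else if x ≠ 0 ∧ y ≠ 0 then p ^ n
      else p ^ (n + 1) :=
  stmt13_general p n x y z
end

section
/- Let p be a prime and n ≥ 1, and let the Heisenberg group G(p,n) of matrices A(x,y,z) act on (ℤ/pℤ)^{n+2} by matrix-vector multiplication. Then the number of orbits of this action equals pⁿ + 2(p − 1). -/
/-!
Write `v = (a, u, b)` with `a, b ∈ ℤ/pℤ` and `u ∈ (ℤ/pℤ)ⁿ`. Then `A(x,y,z)` sends `v` to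
`(a + x ⬝ u + z b, u + b y, b)`, so the orbit of `v` is the affine hyperplane `{b' = b}` if
`b ≠ 0`, the line `{(a', u, 0)}` if `b = 0` and `u ≠ 0`, and the point `v` if `b = 0` and
`u = 0`. These three kinds contribute `p - 1`, `pⁿ - 1` and `p` orbits.
-/

open Matrix

section ConsSnoc

variable {R : Type*} {n : ℕ}

theorem cons_snoc_dotProduct_cons_snoc [CommSemiring R] (a b a' b' : R) (u u' : Fin n → R) :
    (Fin.cons a (Fin.snoc u b : Fin (n + 1) → R) : Fin (n + 2) → R) ⬝ᵥ
      (Fin.cons a' (Fin.snoc u' b' : Fin (n + 1) → R) : Fin (n + 2) → R) =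
      a * a' + u ⬝ᵥ u' + b * b' := by
  rw [dotProduct, Fin.sum_univ_succ, Fin.sum_univ_castSucc]
  simp [dotProduct, add_assoc]

variable (R n) in
def consSnocEquiv : R × (Fin n → R) × R ≃ (Fin (n + 2) → R) :=
  ((Equiv.refl R).prodCongr ((Equiv.prodComm _ _).trans (Fin.snocEquiv fun _ => R))).trans
    (Fin.consEquiv fun _ => R)

theorem consSnocEquiv_apply (t : R × (Fin n → R) × R) :
    consSnocEquiv R n t = Fin.cons t.1 (Fin.snoc t.2.1 t.2.2 : Fin (n + 1) → R) :=
  rfl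

end ConsSnoc

namespace Heisenberg

section Model

variable {K : Type*} {n : ℕ}

def act [CommSemiring K] (x y : Fin n → K) (z : K) (t : K × (Fin n → K) × K) :
    K × (Fin n → K) × K :=
  (t.1 + x ⬝ᵥ t.2.1 + z * t.2.2, t.2.1 + t.2.2 • y, t.2.2)

def orbit [CommSemiring K] (t : K × (Fin n → K) × K) : Set (K × (Fin n → K) × K) :=
  {s | ∃ (x y : Fin n → K) (z : K), act x y z t = s}

variable [Field K]

theorem orbit_mk_of_ne_zero (a : K) (u : Fin n → K) {b : K} (hb : b ≠ 0) :
    orbit (a, u, b) = {s | s.2.2 = b} := by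
  ext ⟨a', u', b'⟩
  constructor
  · rintro ⟨x, y, z, h⟩
    simp only [act, Prod.mk.injEq] at h
    exact h.2.2.symm
  · intro (hb' : b' = b)
    subst b'
    refine ⟨0, b⁻¹ • (u' - u), (a' - a) / b, ?_⟩
    simp [act, hb]

theorem orbit_mk_zero_of_ne_zero (a : K) {u : Fin n → K} (hu : u ≠ 0) :
    orbit (a, u, 0) = {s | s.2 = (u, 0)} := by
  ext ⟨a', u', b'⟩
  constructor
  · rintro ⟨x, y, z, h⟩
    simp only [act, Prod.mk.injEq] at h
    simp [← h.2.1, ← h.2.2]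
  · rintro ⟨⟩
    obtain ⟨i, hi⟩ : ∃ i, u i ≠ 0 := Function.ne_iff.mp hu
    refine ⟨Pi.single i ((a' - a) / u i), 0, 0, ?_⟩
    simp [act, single_dotProduct, hi]

theorem orbit_mk_zero_zero (a : K) :
    orbit (a, (0 : Fin n → K), 0) = {(a, 0, 0)} := by
  ext s
  simp [orbit, act, eq_comm]

def hyperplaneOrbits : Set (Set (K × (Fin n → K) × K)) :=
  (fun b => {s | s.2.2 = b}) '' {0}ᶜ

def lineOrbits : Set (Set (K × (Fin n → K) × K)) :=
  (fun u => {s | s.2 = (u, 0)}) '' {0}ᶜ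

def pointOrbits : Set (Set (K × (Fin n → K) × K)) :=
  Set.range fun a => {(a, 0, 0)}

theorem range_orbit :
    Set.range (orbit (K := K) (n := n)) = hyperplaneOrbits ∪ lineOrbits ∪ pointOrbits := by
  ext S
  constructor
  · rintro ⟨⟨a, u, b⟩, rfl⟩
    by_cases hb : b = 0
    · subst hb
      by_cases hu : u = 0
      · subst hu
        exact Or.inr ⟨a, (orbit_mk_zero_zero a).symm⟩
      · exact Or.inl (Or.inr ⟨u, hu, (orbit_mk_zero_of_ne_zero a hu).symm⟩)
    · exact Or.inl (Or.inl ⟨b, hb, (orbit_mk_of_ne_zero a u hb).symm⟩)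
  · rintro ((⟨b, hb, rfl⟩ | ⟨u, hu, rfl⟩) | ⟨a, rfl⟩)
    · exact ⟨(0, 0, b), orbit_mk_of_ne_zero 0 0 hb⟩
    · exact ⟨(0, u, 0), orbit_mk_zero_of_ne_zero 0 hu⟩
    · exact ⟨(a, 0, 0), orbit_mk_zero_zero a⟩

theorem disjoint_hyperplaneOrbits_lineOrbits :
    Disjoint (hyperplaneOrbits (K := K) (n := n)) lineOrbits := by
  refine Set.disjoint_left.mpr ?_
  rintro _ ⟨b, hb, rfl⟩ ⟨u, -, h⟩
  exact hb (by simpa [eq_comm] using Set.ext_iff.mp h (0, u, 0))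

theorem disjoint_union_pointOrbits :
    Disjoint (hyperplaneOrbits (K := K) (n := n) ∪ lineOrbits) pointOrbits := by
  refine Set.disjoint_left.mpr ?_
  rintro _ (⟨b, hb, rfl⟩ | ⟨u, hu, rfl⟩) ⟨a, h⟩
  · exact hb (by simpa [eq_comm] using Set.ext_iff.mp h (a, 0, 0))
  · exact hu (by simpa [eq_comm] using Set.ext_iff.mp h (a, 0, 0))

theorem ncard_pointOrbits : (pointOrbits (K := K) (n := n)).ncard = Nat.card K :=
  Set.ncard_range_of_injective fun a a' h => by simpa using h

variable [Finite K]

theorem ncard_hyperplaneOrbits : (hyperplaneOrbits (K := K) (n := n)).ncard = Nat.card K - 1 := by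
  have hinj : Set.InjOn (fun b : K => {s : K × (Fin n → K) × K | s.2.2 = b}) {0}ᶜ :=
    fun b _ b' _ h => by simpa using Set.ext_iff.mp h (0, 0, b)
  rw [hyperplaneOrbits, hinj.ncard_image, Set.ncard_compl, Set.ncard_singleton]

theorem ncard_lineOrbits : (lineOrbits (K := K) (n := n)).ncard = Nat.card K ^ n - 1 := by
  have hinj : Set.InjOn (fun u : Fin n → K => {s : K × (Fin n → K) × K | s.2 = (u, 0)}) {0}ᶜ :=
    fun u _ u' _ h => by simpa using Set.ext_iff.mp h (0, u, 0)
  rw [lineOrbits, hinj.ncard_image, Set.ncard_compl, Set.ncard_singleton, Nat.card_fun,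
    Nat.card_fin]

theorem ncard_range_orbit :
    (Set.range (orbit (K := K) (n := n))).ncard = Nat.card K ^ n + 2 * (Nat.card K - 1) := by
  have hK : 0 < Nat.card K := Nat.card_pos
  have hKn : 0 < Nat.card K ^ n := pow_pos hK n
  rw [range_orbit, Set.ncard_union_eq disjoint_union_pointOrbits,
    Set.ncard_union_eq disjoint_hyperplaneOrbits_lineOrbits, ncard_hyperplaneOrbits,
    ncard_lineOrbits, ncard_pointOrbits]
  omega

end Model

section HeisMatrix

variable {p n : ℕ} (x y : Fin n → ZMod p) (z : ZMod p)

theorem heis_zero : heis p n x y z 0 = Fin.cons 1 (Fin.snoc x z : Fin (n + 1) → ZMod p) := by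
  ext j
  refine Fin.cases ?_ (fun j => Fin.lastCases ?_ (fun k => ?_) j) j <;>
    simp only [heis, Matrix.of_apply, Fin.cons_zero, Fin.cons_succ, Fin.snoc_last,
      Fin.snoc_castSucc] <;>
    simp [Fin.ext_iff, (Fin.is_lt _).ne]

theorem heis_succ_castSucc (m : Fin n) : heis p n x y z m.castSucc.succ =
    Fin.cons 0 (Fin.snoc (Pi.single m 1) (y m) : Fin (n + 1) → ZMod p) := by
  ext j
  refine Fin.cases ?_ (fun j => Fin.lastCases ?_ (fun k => ?_) j) j <;>
    simp only [heis, Matrix.of_apply, Fin.cons_zero, Fin.cons_succ, Fin.snoc_last,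
      Fin.snoc_castSucc] <;>
    simp [Fin.ext_iff, Pi.single_apply, (Fin.is_lt _).ne, (Fin.is_lt _).ne', eq_comm]

theorem heis_last : heis p n x y z (Fin.last _) =
    Fin.cons 0 (Fin.snoc 0 1 : Fin (n + 1) → ZMod p) := by
  ext j
  refine Fin.cases ?_ (fun j => Fin.lastCases ?_ (fun k => ?_) j) j <;>
    simp only [heis, Matrix.of_apply, Fin.cons_zero, Fin.cons_succ, Fin.snoc_last,
      Fin.snoc_castSucc] <;>
    simp [Fin.ext_iff, (Fin.is_lt _).ne, (Fin.is_lt _).ne']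

theorem heis_mulVec_consSnocEquiv (t : ZMod p × (Fin n → ZMod p) × ZMod p) :
    heis p n x y z *ᵥ consSnocEquiv _ n t = consSnocEquiv _ n (act x y z t) := by
  obtain ⟨a, u, b⟩ := t
  ext i
  refine Fin.cases ?_ (fun j => Fin.lastCases ?_ (fun m => ?_) j) i
  · simp [mulVec, consSnocEquiv_apply, heis_zero, cons_snoc_dotProduct_cons_snoc, act]
  · simp [mulVec, consSnocEquiv_apply, Fin.succ_last, heis_last, cons_snoc_dotProduct_cons_snoc,
      act]
  · simp [mulVec, consSnocEquiv_apply, heis_succ_castSucc, cons_snoc_dotProduct_cons_snoc, act]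
    ring

theorem setOf_heis_mulVec_consSnocEquiv (t : ZMod p × (Fin n → ZMod p) × ZMod p) :
    {w | ∃ (x y : Fin n → ZMod p) (z : ZMod p), heis p n x y z *ᵥ consSnocEquiv _ n t = w} =
      consSnocEquiv _ n '' orbit t := by
  ext w
  simp [orbit, heis_mulVec_consSnocEquiv, ← Equiv.eq_symm_apply]

end HeisMatrix

end Heisenberg

open Heisenberg

theorem stmt14_general (p n : ℕ) [Fact p.Prime] :
    Set.ncard
        {S : Set (Fin (n + 2) → ZMod p) |
          ∃ v : Fin (n + 2) → ZMod p,
            S = {w | ∃ (x y : Fin n → ZMod p) (z : ZMod p),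
                      (heis p n x y z).mulVec v = w}}
      = p ^ n + 2 * (p - 1) := by
  set e := consSnocEquiv (ZMod p) n
  have horbits : {S : Set (Fin (n + 2) → ZMod p) | ∃ v : Fin (n + 2) → ZMod p,
      S = {w | ∃ (x y : Fin n → ZMod p) (z : ZMod p), (heis p n x y z).mulVec v = w}} =
      Set.image e '' Set.range orbit := by
    ext S
    constructor
    · rintro ⟨v, rfl⟩
      obtain ⟨t, rfl⟩ := e.surjective v
      exact ⟨orbit t, ⟨t, rfl⟩, (setOf_heis_mulVec_consSnocEquiv t).symm⟩
    · rintro ⟨_, ⟨t, rfl⟩, rfl⟩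
      exact ⟨e t, (setOf_heis_mulVec_consSnocEquiv t).symm⟩
  rw [horbits, Set.ncard_image_of_injective _ (Set.image_injective.mpr e.injective),
    ncard_range_orbit, Nat.card_zmod]

/-- The number of orbits of the Heisenberg group `G(p,n)` (the group of all
matrices `A(x,y,z)`) acting on `(ℤ/pℤ)^{n+2}` by matrix-vector multiplication equals
`pⁿ + 2(p - 1)`.  Orbits are the sets `{A(x,y,z)·v : x, y, z}` for `v ∈ (ℤ/pℤ)^{n+2}`. -/
theorem stmt14 (p n : ℕ) [Fact p.Prime] (hn : 1 ≤ n) :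
    Set.ncard
        {S : Set (Fin (n + 2) → ZMod p) |
          ∃ v : Fin (n + 2) → ZMod p,
            S = {w | ∃ (x y : Fin n → ZMod p) (z : ZMod p),
                      (heis p n x y z).mulVec v = w}}
      = p ^ n + 2 * (p - 1) :=
  stmt14_general p n
end

section
/- Let p be a prime, n ≥ 1, and c ∈ ℤ/pℤ with c ≠ 0. Let U be the complex vector space of all functions f : (ℤ/pℤ)ⁿ → ℂ, let ω = exp(2πi/p), and for x, y ∈ (ℤ/pℤ)ⁿ and z ∈ ℤ/pℤ define the operator T_{x,y,z} on U by (T_{x,y,z} f)(w) = ω^{c(y·w+z)} f(w + x), where the exponent is evaluated via the canonical representative in {0,…,p−1}. Then the only subspaces of U invariant under every operator T_{x,y,z} are {0} and U. -/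
/-- `ω = exp(2πi/p)`, a primitive `p`-th root of unity. -/
noncomputable def heisOmega (p : ℕ) : ℂ := Complex.exp (2 * Real.pi * Complex.I / p)

/-- The dot product `y · w = Σᵢ yᵢ wᵢ` in `ℤ/pℤ`. -/
def zdot {p n : ℕ} (y w : Fin n → ZMod p) : ZMod p := ∑ i, y i * w i

/-- The operator `T_{x,y,z}` on `U = {f : (ℤ/pℤ)ⁿ → ℂ}`, given by
`(T_{x,y,z} f)(w) = ω^{c(y·w+z)} f(w + x)`, where the exponent is evaluated via the
canonical representative in `{0, …, p-1}`.  These operators define the `pⁿ`-dimensional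
irreducible representation `ρ_c` of the Heisenberg group `G(p,n)`. -/
noncomputable def heisT (p n : ℕ) (c : ZMod p) (x y : Fin n → ZMod p) (z : ZMod p) :
    ((Fin n → ZMod p) → ℂ) →ₗ[ℂ] ((Fin n → ZMod p) → ℂ) where
  toFun f := fun w => heisOmega p ^ (c * (zdot y w + z)).val * f (w + x)
  map_add' f g := by funext w; simp [mul_add]
  map_smul' a f := by funext w; simp [Pi.smul_apply, smul_eq_mul]; ring

/-!
Let `f ≠ 0` lie in an invariant subspace, with `f w₀ ≠ 0`. Summing the modulations `T_{0,y,0} f`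
with weights `ω^{-c(y·w₀)}` gives `w ↦ f w · Σ_y ω^{c(y·(w - w₀))}`, and this character sum
vanishes for `w ≠ w₀` because `c ≠ 0`; hence the point mass `δ_{w₀}` lies in the subspace.
The translations `T_{x,0,0}` carry it to every `δ_u`, and these span `U`.
-/

theorem AddChar.sum_dotProduct_eq_zero {F R ι : Type*} [Field F] [Fintype F] [CommRing R]
    [IsDomain R] [Fintype ι] [DecidableEq ι] {ψ : AddChar F R} (hψ : ψ ≠ 1) {v : ι → F}
    (hv : v ≠ 0) :
    ∑ y : ι → F, ψ (y ⬝ᵥ v) = 0 := by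
  obtain ⟨i, hi⟩ := Function.ne_iff.1 hv
  obtain ⟨a, ha⟩ := AddChar.ne_one_iff.1 hψ
  let φ : AddChar (ι → F) R :=
    ψ.compAddMonoidHom (AddMonoidHom.mk' (· ⬝ᵥ v) fun y y' => add_dotProduct y y' v)
  refine AddChar.sum_eq_zero_of_ne_one (ψ := φ) <|
    AddChar.ne_one_iff.2 ⟨Pi.single i (a / v i), ?_⟩
  simpa [φ, single_dotProduct, div_mul_cancel₀ _ hi] using ha

theorem Submodule.eq_top_of_forall_single_mem {K α : Type*} [Semiring K] [Finite α]
    [DecidableEq α] {S : Submodule K (α → K)} (h : ∀ u, Pi.single u 1 ∈ S) : S = ⊤ := by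
  rw [eq_top_iff, ← (Pi.basisFun K α).span_eq, Submodule.span_le]
  rintro _ ⟨u, rfl⟩
  simpa using h u

section Heisenberg

variable {p : ℕ} [Fact p.Prime] {n : ℕ}

theorem isPrimitiveRoot_heisOmega : IsPrimitiveRoot (heisOmega p) p :=
  Complex.isPrimitiveRoot_exp p (NeZero.ne p)

variable (p) in
noncomputable def heisChar : AddChar (ZMod p) ℂ :=
  AddChar.zmodChar p isPrimitiveRoot_heisOmega.pow_eq_one

theorem heisT_apply (c : ZMod p) (x y : Fin n → ZMod p) (z : ZMod p)
    (f : (Fin n → ZMod p) → ℂ) (w : Fin n → ZMod p) :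
    heisT p n c x y z f w = heisChar p (c * (y ⬝ᵥ w + z)) * f (w + x) := by
  rw [heisChar, AddChar.zmodChar_apply]
  rfl

theorem mulShift_heisChar_ne_one {c : ZMod p} (hc : c ≠ 0) : (heisChar p).mulShift c ≠ 1 :=
  AddChar.zmodChar_primitive_of_primitive_root p isPrimitiveRoot_heisOmega hc

theorem sum_heisChar_mul_dotProduct (c : ZMod p) (hc : c ≠ 0) (v : Fin n → ZMod p)
    [Decidable (v = 0)] :
    ∑ y : Fin n → ZMod p, heisChar p (c * (y ⬝ᵥ v)) =
      if v = 0 then (Fintype.card (Fin n → ZMod p) : ℂ) else 0 := by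
  split_ifs with hv
  · simp [hv]
  · exact AddChar.sum_dotProduct_eq_zero (mulShift_heisChar_ne_one hc) hv

theorem heisT_translate_single (c : ZMod p) (x w : Fin n → ZMod p) :
    heisT p n c x 0 0 (Pi.single w 1) = Pi.single (w - x) 1 := by
  funext u
  simp [heisT_apply, Pi.single_apply, eq_sub_iff_add_eq]

theorem sum_heisChar_smul_heisT_eq_smul_single (c : ZMod p) (hc : c ≠ 0)
    (f : (Fin n → ZMod p) → ℂ) (w₀ : Fin n → ZMod p) :
    ∑ y : Fin n → ZMod p, heisChar p (-(c * (y ⬝ᵥ w₀))) • heisT p n c 0 y 0 f =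
      (Fintype.card (Fin n → ZMod p) * f w₀) • Pi.single w₀ 1 := by
  classical
  funext w
  have hchar (y : Fin n → ZMod p) :
      heisChar p (-(c * (y ⬝ᵥ w₀))) * heisChar p (c * (y ⬝ᵥ w)) =
        heisChar p (c * (y ⬝ᵥ (w - w₀))) := by
    rw [← AddChar.map_add_eq_mul, dotProduct_sub]
    ring_nf
  simp only [Finset.sum_apply, Pi.smul_apply, smul_eq_mul, heisT_apply, add_zero, ← mul_assoc]
  rw [← Finset.sum_mul]
  simp only [hchar, sum_heisChar_mul_dotProduct c hc, sub_eq_zero, Pi.single_apply]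
  split_ifs with h <;> simp [h]

end Heisenberg

theorem stmt15_general (p : ℕ) [Fact p.Prime] (n : ℕ) (c : ZMod p) (hc : c ≠ 0) :
    ∀ S : Submodule ℂ ((Fin n → ZMod p) → ℂ),
      (∀ (x y : Fin n → ZMod p) (z : ZMod p), ∀ f ∈ S, heisT p n c x y z f ∈ S) →
      S = ⊥ ∨ S = ⊤ := by
  intro S hS
  refine or_iff_not_imp_left.2 fun hS_ne_bot => ?_
  obtain ⟨f, hfS, hf⟩ := (Submodule.ne_bot_iff S).1 hS_ne_bot
  obtain ⟨w₀, hfw₀⟩ := Function.ne_iff.1 hf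
  have hscale : (Fintype.card (Fin n → ZMod p) : ℂ) * f w₀ ≠ 0 :=
    mul_ne_zero (Nat.cast_ne_zero.2 Fintype.card_ne_zero) hfw₀
  have hδ₀ : Pi.single w₀ 1 ∈ S := by
    have hsum := sum_heisChar_smul_heisT_eq_smul_single c hc f w₀
    rw [← inv_smul_smul₀ hscale (Pi.single w₀ 1), ← hsum]
    exact S.smul_mem _ <| S.sum_mem fun y _ => S.smul_mem _ (hS 0 y 0 f hfS)
  refine Submodule.eq_top_of_forall_single_mem fun u => ?_
  simpa [heisT_translate_single] using hS (w₀ - u) 0 0 _ hδ₀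

/-- For `p` prime, `n ≥ 1` and `c ≠ 0` in `ℤ/pℤ`, the only subspaces of
`U = {f : (ℤ/pℤ)ⁿ → ℂ}` invariant under all the operators `T_{x,y,z}` are `{0}` and `U`
(i.e. the representation `ρ_c` is irreducible). -/
theorem stmt15 (p : ℕ) [Fact p.Prime] (n : ℕ) (hn : 1 ≤ n) (c : ZMod p) (hc : c ≠ 0) :
    ∀ S : Submodule ℂ ((Fin n → ZMod p) → ℂ),
      (∀ (x y : Fin n → ZMod p) (z : ZMod p), ∀ f ∈ S, heisT p n c x y z f ∈ S) →
      S = ⊥ ∨ S = ⊤ :=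
  stmt15_general p n c hc
end

section
/- Let A be a finite nonempty type, and let k, t be natural numbers with 1 ≤ k and t < k. For a function χ : {1,…,k} → A, let S(χ) = {ψ ∈ A : #{i : χ(i) = ψ} ≥ k − t}. Then: (1) for every χ, |S(χ)| · (k − t) ≤ k, so |S(χ)| ≤ ⌊k/(k−t)⌋; and (2) the maximum over all χ of |S(χ)| equals min(|A|, ⌊k/(k−t)⌋). -/
/-!
Each value taken at least `n` times accounts for `n` points of the domain, and these fibres
are disjoint, so at most `|ι| / n` values are heavy. Conversely, if `m ≤ |A|` and `m * n ≤ |ι|`,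
embed `Fin m × Fin n` into `ι` and send the block `{j} × Fin n` to the `j`-th of `m` distinct
values of `A`: this makes `m` values heavy.
-/

open Finset Function

section HeavyValues

variable {ι A : Type*} [Fintype ι] [Fintype A] [DecidableEq A]

def heavyValues (χ : ι → A) (n : ℕ) : Finset A :=
  {ψ | n ≤ #{i | χ i = ψ}}

theorem card_heavyValues_mul_le (χ : ι → A) (n : ℕ) :
    #(heavyValues χ n) * n ≤ Fintype.card ι :=
  calc #(heavyValues χ n) * n = ∑ _ψ ∈ heavyValues χ n, n := by rw [sum_const, smul_eq_mul]
    _ ≤ ∑ ψ ∈ heavyValues χ n, #{i | χ i = ψ} :=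
        sum_le_sum fun _ hψ => (mem_filter.mp hψ).2
    _ ≤ ∑ ψ, #{i | χ i = ψ} := sum_le_sum_of_subset (subset_univ _)
    _ = Fintype.card ι := (card_eq_sum_card_fiberwise fun i _ => mem_univ (χ i)).symm

theorem card_heavyValues_le_div (χ : ι → A) {n : ℕ} (hn : 0 < n) :
    #(heavyValues χ n) ≤ Fintype.card ι / n :=
  (Nat.le_div_iff_mul_le hn).2 (card_heavyValues_mul_le χ n)

theorem exists_le_card_heavyValues [Nonempty A] {m n : ℕ} (hmA : m ≤ Fintype.card A)
    (hmn : m * n ≤ Fintype.card ι) : ∃ χ : ι → A, m ≤ #(heavyValues χ n) := by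
  obtain ⟨e⟩ : Nonempty (Fin m ↪ A) := Embedding.nonempty_of_card_le (by simpa using hmA)
  obtain ⟨f⟩ : Nonempty (Fin m × Fin n ↪ ι) := Embedding.nonempty_of_card_le (by simpa using hmn)
  let χ : ι → A := extend f (fun p => e p.1) fun _ => Classical.arbitrary A
  have hχ (p : Fin m × Fin n) : χ (f p) = e p.1 := f.injective.extend_apply _ _ p
  refine ⟨χ, ?_⟩
  have hblock (j : Fin m) :
      univ.map ((Embedding.sectR j (Fin n)).trans f) ⊆ ({i | χ i = e j} : Finset ι) := by
    intro i hi
    obtain ⟨a, -, rfl⟩ := mem_map.mp hi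
    simp only [mem_filter, mem_univ, true_and, Embedding.trans_apply, Embedding.sectR_apply, hχ]
  have hheavy : univ.map e ⊆ heavyValues χ n := by
    intro ψ hψ
    obtain ⟨j, -, rfl⟩ := mem_map.mp hψ
    simpa [heavyValues] using card_le_card (hblock j)
  simpa using card_le_card hheavy

theorem sup_card_heavyValues [DecidableEq ι] {n : ℕ} (hn : 0 < n) :
    univ.sup (fun χ : ι → A => #(heavyValues χ n)) =
      min (Fintype.card A) (Fintype.card ι / n) := by
  refine le_antisymm
    (Finset.sup_le fun χ _ => le_min (card_le_univ _) (card_heavyValues_le_div χ hn)) ?_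
  set m := min (Fintype.card A) (Fintype.card ι / n)
  obtain hm | hm := m.eq_zero_or_pos
  · simp [hm]
  have : Nonempty A := Fintype.card_pos_iff.mp (hm.trans_le (min_le_left _ _))
  have hmn : m * n ≤ Fintype.card ι :=
    (Nat.mul_le_mul_right n (min_le_right _ _)).trans (Nat.div_mul_le_self _ n)
  obtain ⟨χ, hχ⟩ := exists_le_card_heavyValues (min_le_left _ _) hmn
  exact hχ.trans (le_sup (f := fun χ => #(heavyValues χ n)) (mem_univ χ))

end HeavyValues

theorem stmt18_general (A : Type) [Fintype A] [DecidableEq A]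
    (k t : ℕ) (ht : t < k) :
    (∀ χ : Fin k → A,
      (Finset.univ.filter (fun ψ : A =>
          k - t ≤ (Finset.univ.filter (fun i : Fin k => χ i = ψ)).card)).card * (k - t) ≤ k ∧
      (Finset.univ.filter (fun ψ : A =>
          k - t ≤ (Finset.univ.filter (fun i : Fin k => χ i = ψ)).card)).card ≤ k / (k - t)) ∧
    Finset.univ.sup (fun χ : Fin k → A =>
        (Finset.univ.filter (fun ψ : A =>
          k - t ≤ (Finset.univ.filter (fun i : Fin k => χ i = ψ)).card)).card)
      = min (Fintype.card A) (k / (k - t)) := by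
  have hpos : 0 < k - t := Nat.sub_pos_of_lt ht
  refine ⟨fun χ => ⟨?_, ?_⟩, ?_⟩
  · simpa only [heavyValues, Fintype.card_fin] using card_heavyValues_mul_le χ (k - t)
  · simpa only [heavyValues, Fintype.card_fin] using card_heavyValues_le_div χ hpos
  · simpa only [heavyValues, Fintype.card_fin] using
      sup_card_heavyValues (ι := Fin k) (A := A) hpos

/-- Let `A` be a finite nonempty type and `1 ≤ k`, `t < k`.  For
`χ : {1,…,k} → A` let `S(χ)` be the set of `ψ ∈ A` attained by `χ` at least `k - t` times.
Then (1) `|S(χ)|·(k-t) ≤ k`, so `|S(χ)| ≤ ⌊k/(k-t)⌋`, for every `χ`; and (2) the maximum of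
`|S(χ)|` over all `χ` equals `min(|A|, ⌊k/(k-t)⌋)`. -/
theorem stmt18 (A : Type) [Fintype A] [Nonempty A] [DecidableEq A]
    (k t : ℕ) (hk : 1 ≤ k) (ht : t < k) :
    (∀ χ : Fin k → A,
      (Finset.univ.filter (fun ψ : A =>
          k - t ≤ (Finset.univ.filter (fun i : Fin k => χ i = ψ)).card)).card * (k - t) ≤ k ∧
      (Finset.univ.filter (fun ψ : A =>
          k - t ≤ (Finset.univ.filter (fun i : Fin k => χ i = ψ)).card)).card ≤ k / (k - t)) ∧
    Finset.univ.sup (fun χ : Fin k → A =>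
        (Finset.univ.filter (fun ψ : A =>
          k - t ≤ (Finset.univ.filter (fun i : Fin k => χ i = ψ)).card)).card)
      = min (Fintype.card A) (k / (k - t)) :=
  stmt18_general A k t ht
end

section
/- Let p be a prime and n ≥ 1, let ω = exp(2πi/p), and for x, y ∈ (ℤ/pℤ)ⁿ and z ∈ ℤ/pℤ let N(x,y,z) denote the number of vectors v ∈ (ℤ/pℤ)^{n+2} fixed by the Heisenberg matrix A(x,y,z). Then for α, β ∈ (ℤ/pℤ)ⁿ, the sum Σ over all x, y ∈ (ℤ/pℤ)ⁿ and z ∈ ℤ/pℤ of N(x,y,z)·ω^{−(α·x+β·y)} equals: (pⁿ + 2(p−1))·p^{2n+1} if α = 0 and β = 0; (p−1)·p^{2n+1} if exactly one of α, β is zero; and 0 if α ≠ 0 and β ≠ 0. -/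
/-!
Write `v = (a, w, t)`. The matrix `A(x,y,z)` fixes `v` iff `x·w + z t = 0` and `t y = 0`, whatever
`a` is, so `N(x,y,z) = p · #{(t, w) | x·w + z t = 0, t y = 0}`. After exchanging the sums, each
`t ≠ 0` forces `y = 0` and determines `z`, which leaves the character sum `Σₓ ω^{-α·x}`; `t = 0`
leaves `p · Σ_y ω^{-β·y} · Σ_w Σ_{x ⊥ w} ω^{-α·x}`, and the last double sum is evaluated by
counting the hyperplanes `x^⊥`. Orthogonality of characters turns the whole sum into
`p^{2n+1} ((p - 1)([α = 0] + [β = 0]) + pⁿ [α = 0][β = 0])`.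
-/

open Finset Matrix

lemma AddChar.map_sum_eq_prod {A M ι : Type*} [AddCommMonoid A] [CommMonoid M] (ψ : AddChar A M)
    (s : Finset ι) (f : ι → A) : ψ (∑ i ∈ s, f i) = ∏ i ∈ s, ψ (f i) :=
  map_prod ψ.toMonoidHom (fun i => Multiplicative.ofAdd (f i)) s

lemma AddChar.sum_apply_dotProduct {R R' ι : Type*} [CommRing R] [Fintype R] [DecidableEq R]
    [CommRing R'] [IsDomain R'] [Fintype ι] [DecidableEq ι] {ψ : AddChar R R'}
    (hψ : ψ.IsPrimitive) (γ : ι → R) :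
    ∑ x : ι → R, ψ (γ ⬝ᵥ x) = if γ = 0 then (Fintype.card R : R') ^ Fintype.card ι else 0 := by
  simp_rw [dotProduct, AddChar.map_sum_eq_prod]
  rw [← Fintype.prod_sum fun i a => ψ (γ i * a)]
  simp_rw [mul_comm (γ _), AddChar.sum_mulShift _ hψ, Nat.cast_ite, Nat.cast_zero,
    Fintype.prod_ite_zero]
  simp [funext_iff]

section FiniteField

variable {F : Type*} [Field F] [Fintype F] [DecidableEq F] {ι : Type*} [Fintype ι]
  [DecidableEq ι]

lemma card_dotProduct_eq_zero_mul_card {x : ι → F} (hx : x ≠ 0) :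
    #{w | x ⬝ᵥ w = 0} * Fintype.card F = Fintype.card F ^ Fintype.card ι := by
  let f : (ι → F) →+ F := AddMonoidHom.mk' (x ⬝ᵥ ·) (dotProduct_add x)
  have hf : Function.Surjective f := by
    obtain ⟨i, hi⟩ := Function.ne_iff.mp hx
    exact fun a => ⟨Pi.single i (a / x i), by simp [f, mul_div_cancel₀ _ hi]⟩
  have h := f.ker.card_mul_index
  rw [AddSubgroup.index_ker, f.range_eq_top_of_surjective hf, AddSubgroup.card_top] at h
  simpa [Nat.card_eq_fintype_card, Fintype.card_subtype, f] using h

lemma card_mul_sum_sum_addChar_dotProduct_orthogonal {R : Type*} [CommRing R] [IsDomain R]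
    {ψ : AddChar F R} (hψ : ψ.IsPrimitive) (γ : ι → F) :
    (Fintype.card F : R) * ∑ w, ∑ x, (if x ⬝ᵥ w = 0 then ψ (γ ⬝ᵥ x) else 0) =
      Fintype.card F ^ Fintype.card ι *
        ((if γ = 0 then (Fintype.card F : R) ^ Fintype.card ι else 0) + Fintype.card F - 1) := by
  have hcount (x : ι → F) :
      (Fintype.card F : R) * #{w | x ⬝ᵥ w = 0} = (Fintype.card F : R) ^ Fintype.card ι +
        if x = 0 then (Fintype.card F : R) ^ Fintype.card ι * (Fintype.card F - 1) else 0 := by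
    split_ifs with hx
    · simp only [hx, zero_dotProduct, filter_true, card_univ, Fintype.card_pi, prod_const,
        Nat.cast_pow]
      ring
    · rw [add_zero, mul_comm, ← Nat.cast_mul, ← Nat.cast_pow,
        card_dotProduct_eq_zero_mul_card hx]
  calc (Fintype.card F : R) * ∑ w, ∑ x, (if x ⬝ᵥ w = 0 then ψ (γ ⬝ᵥ x) else 0)
      = ∑ x, ψ (γ ⬝ᵥ x) * ((Fintype.card F : R) * #{w | x ⬝ᵥ w = 0}) := by
        rw [sum_comm, mul_sum]
        refine sum_congr rfl fun x _ => ?_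
        rw [← sum_filter, sum_const, nsmul_eq_mul]
        ring
    _ = (Fintype.card F : R) ^ Fintype.card ι * ∑ x, ψ (γ ⬝ᵥ x) +
          (Fintype.card F : R) ^ Fintype.card ι * (Fintype.card F - 1) := by
        simp [hcount, mul_add, sum_add_distrib, mul_sum, mul_comm]
    _ = _ := by
        rw [AddChar.sum_apply_dotProduct hψ]
        ring

lemma sum_ite_dotProduct_add_mul_eq_zero_of_ne_zero {M : Type*} [AddCommMonoid M] {t : F}
    (ht : t ≠ 0) (w : ι → F) (h : (ι → F) → (ι → F) → M) :
    ∑ x, ∑ y, ∑ z, (if x ⬝ᵥ w + z * t = 0 ∧ t • y = 0 then h x y else 0) = ∑ x, h x 0 := by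
  have hz : ∀ x (z : F), x ⬝ᵥ w + z * t = 0 ↔ z = -(x ⬝ᵥ w) / t := fun x z => by
    rw [eq_div_iff ht, eq_neg_iff_add_eq_zero, add_comm]
  simp [ht, hz, ite_and]

lemma sum_card_dotProduct_add_mul_eq_zero_mul {M : Type*} [CommRing M] (f g : (ι → F) → M) :
    ∑ x, ∑ y, ∑ z,
      (#{tw : F × (ι → F) | x ⬝ᵥ tw.2 + z * tw.1 = 0 ∧ tw.1 • y = 0} : M) * (f x * g y) =
      (∑ y, g y) * (Fintype.card F * ∑ w, ∑ x, if x ⬝ᵥ w = 0 then f x else 0) +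
        (Fintype.card F - 1) * Fintype.card F ^ Fintype.card ι * (∑ x, f x) * g 0 := by
  conv_lhs =>
    simp only [natCast_card_filter, sum_mul, ite_mul, one_mul, zero_mul,
      sum_comm (t := (univ : Finset (F × (ι → F))))]
  rw [Fintype.sum_prod_type, Fintype.sum_eq_add_sum_compl 0]
  congr 1
  · simp only [zero_smul, mul_zero, add_zero, and_true, sum_const, card_univ, nsmul_eq_mul,
      ← ite_zero_mul, ← mul_sum, ← sum_mul]
    ring
  · rw [sum_congr rfl fun t ht => sum_congr rfl fun w _ =>
      sum_ite_dotProduct_add_mul_eq_zero_of_ne_zero (by simpa using ht) w _]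
    rw [sum_const, sum_const, card_compl, card_singleton, card_univ, Fintype.card_fun,
      ← sum_mul, nsmul_eq_mul, nsmul_eq_mul, Nat.cast_sub Fintype.card_pos, Nat.cast_pow]
    ring

end FiniteField

lemma heis_mulVec_cons_snoc {p n : ℕ} (x y : Fin n → ZMod p) (z a : ZMod p)
    (w : Fin n → ZMod p) (t : ZMod p) :
    heis p n x y z *ᵥ Fin.cons a (Fin.snoc w t) =
      Fin.cons (a + (x ⬝ᵥ w + z * t)) (Fin.snoc (w + t • y) t) := by
  ext i
  simp only [mulVec, dotProduct]
  rw [Fin.sum_univ_succ, Fin.sum_univ_castSucc]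
  refine Fin.cases ?_ (Fin.lastCases ?_ fun k => ?_) i <;> simp only [heis, of_apply]
  · simp [Fin.ext_iff, Nat.ne_of_lt]
  · simp [Fin.ext_iff, Nat.ne_of_gt]
  · simp [Nat.ne_of_lt, mul_comm, Fin.succ_ne_zero]

lemma card_fixed_heis {p n : ℕ} [NeZero p] (x y : Fin n → ZMod p) (z : ZMod p) :
    #{v | heis p n x y z *ᵥ v = v} =
      p * #{tw : ZMod p × (Fin n → ZMod p) | x ⬝ᵥ tw.2 + z * tw.1 = 0 ∧ tw.1 • y = 0} := by
  let e : ZMod p × ZMod p × (Fin n → ZMod p) ≃ (Fin (n + 2) → ZMod p) :=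
    ((Equiv.refl _).prodCongr (Fin.snocEquiv fun _ => ZMod p)).trans
      (Fin.consEquiv fun _ => ZMod p)
  have he : ∀ a t w, e (a, t, w) = Fin.cons a (Fin.snoc w t) := fun _ _ _ => rfl
  rw [card_filter, card_filter, ← e.sum_comp, Fintype.sum_prod_type]
  simp only [he, heis_mulVec_cons_snoc, Fin.cons_inj, Fin.snoc_inj, add_eq_left,
    and_true, sum_const, card_univ, ZMod.card, smul_eq_mul]

theorem stmt19_general (p n : ℕ) [Fact p.Prime] (α β : Fin n → ZMod p) :
    (∑ x : Fin n → ZMod p, ∑ y : Fin n → ZMod p, ∑ z : ZMod p,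
      ((Finset.univ.filter
          (fun v : Fin (n + 2) → ZMod p => (heis p n x y z).mulVec v = v)).card : ℂ) *
        heisOmega p ^ (-(zdot α x + zdot β y)).val)
      = if α = 0 ∧ β = 0 then ((p : ℂ) ^ n + 2 * ((p : ℂ) - 1)) * (p : ℂ) ^ (2 * n + 1)
        else if (α = 0 ∧ β ≠ 0) ∨ (α ≠ 0 ∧ β = 0) then ((p : ℂ) - 1) * (p : ℂ) ^ (2 * n + 1)
        else 0 := by
  have hω : IsPrimitiveRoot (heisOmega p) p :=
    Complex.isPrimitiveRoot_exp p (Fact.out : p.Prime).ne_zero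
  let ψ := AddChar.zmodChar p hω.pow_eq_one
  have hψ : ψ.IsPrimitive := AddChar.zmodChar_primitive_of_primitive_root p hω
  have hχ (x y : Fin n → ZMod p) :
      heisOmega p ^ (-(zdot α x + zdot β y)).val = ψ (-α ⬝ᵥ x) * ψ (-β ⬝ᵥ y) := by
    rw [neg_dotProduct, neg_dotProduct, ← AddChar.map_add_eq_mul, ← neg_add]
    rfl
  simp_rw [hχ, card_fixed_heis, Nat.cast_mul, mul_assoc, ← mul_sum]
  rw [sum_card_dotProduct_add_mul_eq_zero_mul,
    card_mul_sum_sum_addChar_dotProduct_orthogonal hψ, AddChar.sum_apply_dotProduct hψ,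
    AddChar.sum_apply_dotProduct hψ]
  simp only [ZMod.card, Fintype.card_fin, dotProduct_zero, AddChar.map_zero_eq_one, neg_eq_zero]
  by_cases hα : α = 0 <;> by_cases hβ : β = 0 <;> simp [hα, hβ] <;> ring

/-- Let `N(x,y,z)` be the number of vectors of `(ℤ/pℤ)^{n+2}` fixed by the
Heisenberg matrix `A(x,y,z)`.  For `α, β ∈ (ℤ/pℤ)ⁿ`, the sum over all `x, y, z` of
`N(x,y,z)·ω^{−(α·x+β·y)}` equals `(pⁿ + 2(p−1))·p^{2n+1}` if `α = β = 0`;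
`(p−1)·p^{2n+1}` if exactly one of `α, β` is zero; and `0` if both are nonzero.
(This is `|G(p,n)|` times the multiplicity of the character `χ_{α,β}` in the permutation
representation of the Heisenberg group.) -/
theorem stmt19 (p n : ℕ) [Fact p.Prime] (hn : 1 ≤ n) (α β : Fin n → ZMod p) :
    (∑ x : Fin n → ZMod p, ∑ y : Fin n → ZMod p, ∑ z : ZMod p,
      ((Finset.univ.filter
          (fun v : Fin (n + 2) → ZMod p => (heis p n x y z).mulVec v = v)).card : ℂ) *
        heisOmega p ^ (-(zdot α x + zdot β y)).val)
      = if α = 0 ∧ β = 0 then ((p : ℂ) ^ n + 2 * ((p : ℂ) - 1)) * (p : ℂ) ^ (2 * n + 1)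
        else if (α = 0 ∧ β ≠ 0) ∨ (α ≠ 0 ∧ β = 0) then ((p : ℂ) - 1) * (p : ℂ) ^ (2 * n + 1)
        else 0 :=
  stmt19_general p n α β
end
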